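/- arXiv:1001.0797 — 5 statements merged into one kernel-verified Lean document; each statement's English description precedes it below -/
import Mathlib

section
/- Let F and H be j-γ_t-critical and k-γ_t-critical graphs, respectively, each with minimum degree at least two, and let G be the graph formed by identifying a vertex of F with a vertex of H (vertex amalgamation). If γ_t(G) = j + k − 1, then G is also γ_t-critical. -/
/-!
Delete a vertex `x` of the amalgamation `G`, say on the `F` side (possibly the identified
vertex `v`). Since `δ ≥ 2`, no vertex is a support vertex and no vertex becomes isolated after
one deletion, so criticality gives total dominating sets of `F - x` and `H - v` of sizes at most
`j - 1` and `k - 1`. Both graphs map homomorphically into `G - x` with images covering it, so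
their union totally dominates `G - x`, and `γₜ(G - x) ≤ j + k - 2 < γₜ(G)`.
-/

open scoped Classical

namespace SimpleGraph

variable {V : Type*}

/-- A set `S` is a total dominating set if every vertex is adjacent to a vertex of `S`. -/
def IsTotalDomSet (G : SimpleGraph V) (S : Set V) : Prop :=
  ∀ v : V, ∃ u ∈ S, G.Adj v u

/-- The total domination number: minimum cardinality of a total dominating set. -/
noncomputable def totalDomNum (G : SimpleGraph V) [Fintype V] : ℕ :=
  sInf {n : ℕ | ∃ S : Finset V, G.IsTotalDomSet ↑S ∧ S.card = n}

/-- The graph obtained by deleting the vertex `v`. -/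
def deleteVert (G : SimpleGraph V) (v : V) : SimpleGraph {u : V // u ≠ v} :=
  G.induce {u : V | u ≠ v}

/-- A support vertex is a vertex adjacent to a leaf (a vertex of degree one). -/
noncomputable def IsSupportVertex (G : SimpleGraph V) [Fintype V] (v : V) : Prop :=
  ∃ u : V, G.Adj v u ∧ G.degree u = 1

/-- `G` is total domination vertex critical: it has no isolated vertex and deleting any
vertex that is not a support vertex decreases the total domination number. -/
noncomputable def IsTotalDomCritical (G : SimpleGraph V) [Fintype V] : Prop :=
  (∀ v : V, 0 < G.degree v) ∧
  ∀ v : V, ¬ G.IsSupportVertex v →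
    (G.deleteVert v).totalDomNum < G.totalDomNum

/-- The vertex amalgamation of `G₁` and `G₂` identifying `v₁` with `v₂`. -/
def amalgamation {V₁ V₂ : Type*} (G₁ : SimpleGraph V₁) (G₂ : SimpleGraph V₂)
    (v₁ : V₁) (v₂ : V₂) : SimpleGraph (V₁ ⊕ {x : V₂ // x ≠ v₂}) where
  Adj x y :=
    match x, y with
    | Sum.inl a, Sum.inl b => G₁.Adj a b
    | Sum.inl a, Sum.inr b => a = v₁ ∧ G₂.Adj v₂ b.1
    | Sum.inr a, Sum.inl b => b = v₁ ∧ G₂.Adj v₂ a.1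
    | Sum.inr a, Sum.inr b => G₂.Adj a.1 b.1
  symm := ⟨by
    rintro (a | a) (b | b) h
    · exact G₁.adj_symm h
    · exact h
    · exact h
    · exact G₂.adj_symm h⟩
  loopless := ⟨by
    rintro (a | a) h
    · exact G₁.irrefl (v := a) h
    · exact G₂.irrefl (v := a.1) h⟩

def Hom.deleteVert {V W : Type*} {G : SimpleGraph V} {G' : SimpleGraph W} (f : G →g G')
    (v : V) (w : W) (h : ∀ u, f u = w → u = v) : G.deleteVert v →g G'.deleteVert w where
  toFun u := ⟨f u, fun hu => u.2 (h _ hu)⟩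
  map_rel' huv := f.map_adj huv

section TotalDomination

variable {V A B : Type*}

theorem IsTotalDomSet.image_union {G : SimpleGraph V} {GA : SimpleGraph A} {GB : SimpleGraph B}
    (f : GA →g G) (g : GB →g G) (hcover : ∀ v, v ∈ Set.range f ∪ Set.range g)
    {S : Set A} {T : Set B} (hS : GA.IsTotalDomSet S) (hT : GB.IsTotalDomSet T) :
    G.IsTotalDomSet (f '' S ∪ g '' T) := by
  intro v
  rcases hcover v with ⟨a, rfl⟩ | ⟨b, rfl⟩
  · obtain ⟨s, hs, hadj⟩ := hS a
    exact ⟨f s, Or.inl ⟨s, hs, rfl⟩, f.map_adj hadj⟩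
  · obtain ⟨t, ht, hadj⟩ := hT b
    exact ⟨g t, Or.inr ⟨t, ht, rfl⟩, g.map_adj hadj⟩

variable [Fintype V] [Fintype A] [Fintype B]

theorem totalDomNum_le_card (G : SimpleGraph V) {S : Finset V} (h : G.IsTotalDomSet S) :
    G.totalDomNum ≤ S.card :=
  Nat.sInf_le ⟨S, h, rfl⟩

theorem exists_isTotalDomSet_card_eq {G : SimpleGraph V} (h : ∀ v, ∃ u, G.Adj v u) :
    ∃ S : Finset V, G.IsTotalDomSet S ∧ S.card = G.totalDomNum := by
  have huniv : G.IsTotalDomSet (Finset.univ : Finset V) :=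
    fun v => let ⟨u, hu⟩ := h v; ⟨u, by simp, hu⟩
  exact Nat.sInf_mem (s := {n | ∃ S : Finset V, G.IsTotalDomSet S ∧ S.card = n})
    ⟨_, _, huniv, rfl⟩

theorem totalDomNum_le_add {G : SimpleGraph V} {GA : SimpleGraph A} {GB : SimpleGraph B}
    (f : GA →g G) (g : GB →g G) (hcover : ∀ v, v ∈ Set.range f ∪ Set.range g)
    (hA : ∀ a, ∃ a', GA.Adj a a') (hB : ∀ b, ∃ b', GB.Adj b b') :
    G.totalDomNum ≤ GA.totalDomNum + GB.totalDomNum := by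
  obtain ⟨S, hS, hSc⟩ := exists_isTotalDomSet_card_eq hA
  obtain ⟨T, hT, hTc⟩ := exists_isTotalDomSet_card_eq hB
  rw [← hSc, ← hTc]
  calc G.totalDomNum ≤ (S.image f ∪ T.image g).card :=
        totalDomNum_le_card G (by push_cast; exact hS.image_union f g hcover hT)
    _ ≤ (S.image f).card + (T.image g).card := Finset.card_union_le _ _
    _ ≤ S.card + T.card := add_le_add Finset.card_image_le Finset.card_image_le

theorem exists_adj_deleteVert_of_two_le_minDegree {G : SimpleGraph V} (h : 2 ≤ G.minDegree)
    (x : V) (v : {u : V // u ≠ x}) : ∃ u, (G.deleteVert x).Adj v u := by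
  have h2 : 1 < (G.neighborFinset v).card := by
    rw [card_neighborFinset_eq_degree]; exact h.trans (G.minDegree_le_degree v)
  obtain ⟨b, hb, c, hc, hbc⟩ := Finset.one_lt_card.mp h2
  rw [mem_neighborFinset] at hb hc
  by_cases hbx : b = x
  · exact ⟨⟨c, fun hcx => hbc (hbx.trans hcx.symm)⟩, hc⟩
  · exact ⟨⟨b, hbx⟩, hb⟩

theorem not_isSupportVertex_of_two_le_minDegree {G : SimpleGraph V} (h : 2 ≤ G.minDegree)
    (v : V) : ¬ G.IsSupportVertex v := by
  rintro ⟨u, -, hu⟩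
  have := h.trans (G.minDegree_le_degree u)
  omega

theorem IsTotalDomCritical.totalDomNum_deleteVert_lt {G : SimpleGraph V}
    (hG : G.IsTotalDomCritical) (h : 2 ≤ G.minDegree) (v : V) :
    (G.deleteVert v).totalDomNum < G.totalDomNum :=
  hG.2 v (not_isSupportVertex_of_two_le_minDegree h v)

/- Stated for an abstract `V` (rather than for the amalgamation) so that the `Fintype` instance on
`{u // u ≠ v}` is the classical one appearing in `IsTotalDomCritical`. -/
theorem totalDomNum_deleteVert_le_add {G : SimpleGraph V} {GA : SimpleGraph A}
    {GB : SimpleGraph B} (f : GA →g G) (g : GB →g G) {v : V} {a : A} {b : B}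
    (hfa : ∀ x, f x = v → x = a) (hgb : ∀ y, g y = v → y = b)
    (hcover : ∀ w ≠ v, (∃ x ≠ a, f x = w) ∨ ∃ y ≠ b, g y = w)
    (hA : 2 ≤ GA.minDegree) (hB : 2 ≤ GB.minDegree) :
    (G.deleteVert v).totalDomNum ≤
      (GA.deleteVert a).totalDomNum + (GB.deleteVert b).totalDomNum := by
  refine totalDomNum_le_add (f.deleteVert a v hfa) (g.deleteVert b v hgb) ?_
    (exists_adj_deleteVert_of_two_le_minDegree hA a)
    (exists_adj_deleteVert_of_two_le_minDegree hB b)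
  rintro ⟨w, hw⟩
  rcases hcover w hw with ⟨x, hx, rfl⟩ | ⟨y, hy, rfl⟩
  · exact Or.inl ⟨⟨x, hx⟩, rfl⟩
  · exact Or.inr ⟨⟨y, hy⟩, rfl⟩

end TotalDomination

namespace amalgamation

variable {V₁ V₂ : Type*} (F : SimpleGraph V₁) (H : SimpleGraph V₂) (v₁ : V₁)
  (v₂ : V₂)

def inl : F →g amalgamation F H v₁ v₂ where
  toFun := Sum.inl
  map_rel' h := h

noncomputable def inr : H →g amalgamation F H v₁ v₂ where
  toFun b := if h : b = v₂ then Sum.inl v₁ else Sum.inr ⟨b, h⟩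
  map_rel' {b c} h := by
    by_cases hb : b = v₂ <;> by_cases hc : c = v₂ <;> subst_vars
    · exact (H.irrefl h).elim
    all_goals simp_all [amalgamation, H.adj_symm h]

variable {F H v₁ v₂}

@[simp]
theorem inr_apply_self : inr F H v₁ v₂ v₂ = Sum.inl v₁ := dif_pos rfl

@[simp]
theorem inr_apply_val (b : {x : V₂ // x ≠ v₂}) : inr F H v₁ v₂ b.1 = Sum.inr b :=
  dif_neg b.2

theorem inr_eq_inr_iff {b : V₂} {c : {x : V₂ // x ≠ v₂}} :
    inr F H v₁ v₂ b = Sum.inr c ↔ b = c.1 := by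
  by_cases hb : b = v₂
  · subst hb
    simpa using fun h => c.2 h.symm
  · simp [inr, hb, Subtype.ext_iff]

theorem eq_of_inr_eq_inl {b : V₂} {a : V₁} (h : inr F H v₁ v₂ b = Sum.inl a) :
    b = v₂ := by
  by_contra hb
  simp [inr, hb] at h

theorem exists_inl_or_inr_of_ne_inl {a : V₁} {w : V₁ ⊕ {x : V₂ // x ≠ v₂}}
    (hw : w ≠ Sum.inl a) :
    (∃ x ≠ a, inl F H v₁ v₂ x = w) ∨ ∃ y ≠ v₂, inr F H v₁ v₂ y = w := by
  rcases w with b | b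
  · exact Or.inl ⟨b, fun h => hw (congrArg _ h), rfl⟩
  · exact Or.inr ⟨b.1, b.2, inr_apply_val b⟩

theorem exists_inl_or_inr_of_ne_inr {a : {x : V₂ // x ≠ v₂}}
    {w : V₁ ⊕ {x : V₂ // x ≠ v₂}} (hw : w ≠ Sum.inr a) :
    (∃ x ≠ v₁, inl F H v₁ v₂ x = w) ∨ ∃ y ≠ a.1, inr F H v₁ v₂ y = w := by
  rcases w with b | b
  · by_cases hb : b = v₁
    · subst hb
      exact Or.inr ⟨v₂, fun h => a.2 h.symm, inr_apply_self⟩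
    · exact Or.inl ⟨b, hb, rfl⟩
  · exact Or.inr ⟨b.1, fun h => hw (congrArg _ (Subtype.ext h)), inr_apply_val b⟩

variable [Fintype V₁] [Fintype V₂]

theorem degree_pos (hF : ∀ a, 0 < F.degree a) (hH : ∀ b, 0 < H.degree b)
    (w : V₁ ⊕ {x : V₂ // x ≠ v₂}) : 0 < (amalgamation F H v₁ v₂).degree w := by
  rw [degree_pos_iff_exists_adj]
  rcases w with a | b
  · obtain ⟨a', ha'⟩ := (degree_pos_iff_exists_adj _ _).1 (hF a)
    exact ⟨_, (inl F H v₁ v₂).map_adj ha'⟩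
  · obtain ⟨b', hb'⟩ := (degree_pos_iff_exists_adj _ _).1 (hH b.1)
    exact ⟨_, by simpa using (inr F H v₁ v₂).map_adj hb'⟩

end amalgamation

/-- the vertex amalgamation of a `j`-critical and a `k`-critical graph
(with minimum degree at least two) having total domination number `j + k - 1`
is itself `γₜ`-critical. -/
theorem stmt1 {V₁ V₂ : Type*} [Fintype V₁] [Fintype V₂]
    (F : SimpleGraph V₁) (H : SimpleGraph V₂) (j k : ℕ) (v₁ : V₁) (v₂ : V₂)
    (hF : F.IsTotalDomCritical) (hFj : F.totalDomNum = j)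
    (hH : H.IsTotalDomCritical) (hHk : H.totalDomNum = k)
    (hFδ : 2 ≤ F.minDegree) (hHδ : 2 ≤ H.minDegree)
    (hγ : (amalgamation F H v₁ v₂).totalDomNum = j + k - 1) :
    (amalgamation F H v₁ v₂).IsTotalDomCritical := by
  refine ⟨amalgamation.degree_pos hF.1 hH.1, ?_⟩
  rintro (a | a) -
  · have hsplit := totalDomNum_deleteVert_le_add (v := Sum.inl a)
      (amalgamation.inl F H v₁ v₂) (amalgamation.inr F H v₁ v₂)
      (fun _ h => Sum.inl_injective h) (fun _ => amalgamation.eq_of_inr_eq_inl)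
      (fun _ => amalgamation.exists_inl_or_inr_of_ne_inl) hFδ hHδ
    have hFlt := hF.totalDomNum_deleteVert_lt hFδ a
    have hHlt := hH.totalDomNum_deleteVert_lt hHδ v₂
    omega
  · have hsplit := totalDomNum_deleteVert_le_add (v := Sum.inr a)
      (amalgamation.inl F H v₁ v₂) (amalgamation.inr F H v₁ v₂)
      (fun _ h => (Sum.inl_ne_inr h).elim) (fun _ => amalgamation.inr_eq_inr_iff.1)
      (fun _ => amalgamation.exists_inl_or_inr_of_ne_inr) hFδ hHδ
    have hFlt := hF.totalDomNum_deleteVert_lt hFδ v₁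
    have hHlt := hH.totalDomNum_deleteVert_lt hHδ a.1
    omega

end SimpleGraph
end

section
/- If G is a γ_t-critical graph, then for every vertex v of G that is not a support vertex, γ_t(G − v) = γ_t(G) − 1. -/
open scoped Classical

namespace SimpleGraph

variable {V : Type*}

/-- in a `γₜ`-critical graph, deleting a non-support vertex decreases the
total domination number by exactly one. -/
theorem stmt3 {V : Type*} [Fintype V] (G : SimpleGraph V)
    (hcrit : G.IsTotalDomCritical) (v : V) (hv : ¬ G.IsSupportVertex v) :
    (G.deleteVert v).totalDomNum = G.totalDomNum - 1 := by
  have hlt := hcrit.2 v hv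
  -- every vertex ≠ v has a neighbor ≠ v
  have hnb : ∀ w : V, w ≠ v → ∃ u : V, u ≠ v ∧ G.Adj w u := by
    intro w hw
    by_contra h
    push_neg at h
    obtain ⟨u0, hu0⟩ := (G.degree_pos_iff_exists_adj w).1 (hcrit.1 w)
    have hu0v : u0 = v := by by_contra h'; exact (h u0 h') hu0
    subst hu0v
    apply hv
    refine ⟨w, hu0.symm, ?_⟩
    have hsub : G.neighborFinset w ⊆ {u0} := by
      intro x hx
      rw [Finset.mem_singleton]
      by_contra h'
      exact (h x h') ((G.mem_neighborFinset w x).1 hx)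
    have h1 : G.degree w ≤ 1 := by
      have h := Finset.card_le_card hsub
      rwa [Finset.card_singleton] at h
    have h2 := hcrit.1 w
    omega
  -- the deleted graph has a total dominating set (univ)
  have hne : {n : ℕ | ∃ S : Finset {u : V // u ≠ v},
      (G.deleteVert v).IsTotalDomSet ↑S ∧ S.card = n}.Nonempty := by
    refine ⟨_, Finset.univ, ?_, rfl⟩
    intro w
    obtain ⟨u, huv, hadj⟩ := hnb w.1 w.2
    exact ⟨⟨u, huv⟩, Finset.mem_coe.2 (Finset.mem_univ _), hadj⟩
  obtain ⟨S, hS, hScard⟩ := Nat.sInf_mem hne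
  -- v has a neighbor u0
  obtain ⟨u0, hu0⟩ := (G.degree_pos_iff_exists_adj v).1 (hcrit.1 v)
  have hu0v : u0 ≠ v := (G.ne_of_adj hu0.symm)
  -- build a TDS for G of size ≤ card S + 1
  have hub : G.totalDomNum ≤ (G.deleteVert v).totalDomNum + 1 := by
    have hmem : (insert u0 (S.image Subtype.val)).card ∈
        {n : ℕ | ∃ S : Finset V, G.IsTotalDomSet ↑S ∧ S.card = n} := by
      refine ⟨_, ?_, rfl⟩
      intro w
      by_cases hw : w = v
      · exact ⟨u0, by simp, hw ▸ hu0⟩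
      · obtain ⟨t, htS, hadj⟩ := hS ⟨w, hw⟩
        exact ⟨t.1, by simp [Finset.mem_insert]; right; exact ⟨t.2, htS⟩, hadj⟩
    calc G.totalDomNum ≤ (insert u0 (S.image Subtype.val)).card := Nat.sInf_le hmem
      _ ≤ (S.image Subtype.val).card + 1 := Finset.card_insert_le _ _
      _ ≤ S.card + 1 := by
          have := Finset.card_image_le (f := Subtype.val) (s := S); omega
      _ = (G.deleteVert v).totalDomNum + 1 := by rw [hScard, totalDomNum]
  omega

end SimpleGraph
end

section
/- There is no 3-γ_t-critical graph G of order Δ(G) + 3 with minimum degree δ(G) ≥ 2 and maximum degree Δ(G) equal to 3 or 5. -/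
open scoped Classical

namespace SimpleGraph

variable {V : Type*}

private def corePC (p1 p2 p3 P1 P2 P3 e12 e13 e23 pp : Bool) : Bool :=
  (!(p1 && P1)) && ((!(p2 && P2)) && ((!(p3 && P3)) &&
  ((!p1 || !p2 || !p3) && ((!P1 || !P2 || !P3) &&
  ((P1 || P2 || P3) && ((p1 || p2 || p3) &&
  (((p2 && p3 && !p1) || (P2 && P3 && !P1) ||
    (p2 && !p1 && !e12 && (pp || P2) && (p3 || e23)) ||
    (p3 && !p1 && !e13 && (pp || P3) && (p2 || e23)) ||
    (P2 && !P1 && !e12 && (pp || p2) && (P3 || e23)) ||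
    (P3 && !P1 && !e13 && (pp || p3) && (P2 || e23))) &&
  (((p1 && p3 && !p2) || (P1 && P3 && !P2) ||
    (p1 && !p2 && !e12 && (pp || P1) && (p3 || e13)) ||
    (p3 && !p2 && !e23 && (pp || P3) && (p1 || e13)) ||
    (P1 && !P2 && !e12 && (pp || p1) && (P3 || e13)) ||
    (P3 && !P2 && !e23 && (pp || p3) && (P1 || e13))) &&
  ((p1 && p2 && !p3) || (P1 && P2 && !P3) ||
    (p1 && !p3 && !e13 && (pp || P1) && (p2 || e12)) ||
    (p2 && !p3 && !e23 && (pp || P2) && (p1 || e12)) ||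
    (P1 && !P3 && !e13 && (pp || p1) && (P2 || e12)) ||
    (P2 && !P3 && !e23 && (pp || p2) && (P1 || e12)))))))))))

private theorem corePC_false : ∀ p1 p2 p3 P1 P2 P3 e12 e13 e23 pp : Bool,
    corePC p1 p2 p3 P1 P2 P3 e12 e13 e23 pp = false := by decide

theorem finalProp (p1 p2 p3 P1 P2 P3 e12 e13 e23 pp : Prop)
    [Decidable p1] [Decidable p2] [Decidable p3] [Decidable P1] [Decidable P2] [Decidable P3]
    [Decidable e12] [Decidable e13] [Decidable e23] [Decidable pp]
    (h1 : ¬(p1 ∧ P1)) (h2 : ¬(p2 ∧ P2)) (h3 : ¬(p3 ∧ P3))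
    (hc2p : ¬p1 ∨ ¬p2 ∨ ¬p3) (hc2P : ¬P1 ∨ ¬P2 ∨ ¬P3)
    (hdp : P1 ∨ P2 ∨ P3) (hdP : p1 ∨ p2 ∨ p3)
    (hq1 : (p2 ∧ p3 ∧ ¬p1) ∨ (P2 ∧ P3 ∧ ¬P1) ∨
      (p2 ∧ ¬p1 ∧ ¬e12 ∧ (pp ∨ P2) ∧ (p3 ∨ e23)) ∨
      (p3 ∧ ¬p1 ∧ ¬e13 ∧ (pp ∨ P3) ∧ (p2 ∨ e23)) ∨
      (P2 ∧ ¬P1 ∧ ¬e12 ∧ (pp ∨ p2) ∧ (P3 ∨ e23)) ∨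
      (P3 ∧ ¬P1 ∧ ¬e13 ∧ (pp ∨ p3) ∧ (P2 ∨ e23)))
    (hq2 : (p1 ∧ p3 ∧ ¬p2) ∨ (P1 ∧ P3 ∧ ¬P2) ∨
      (p1 ∧ ¬p2 ∧ ¬e12 ∧ (pp ∨ P1) ∧ (p3 ∨ e13)) ∨
      (p3 ∧ ¬p2 ∧ ¬e23 ∧ (pp ∨ P3) ∧ (p1 ∨ e13)) ∨
      (P1 ∧ ¬P2 ∧ ¬e12 ∧ (pp ∨ p1) ∧ (P3 ∨ e13)) ∨
      (P3 ∧ ¬P2 ∧ ¬e23 ∧ (pp ∨ p3) ∧ (P1 ∨ e13)))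
    (hq3 : (p1 ∧ p2 ∧ ¬p3) ∨ (P1 ∧ P2 ∧ ¬P3) ∨
      (p1 ∧ ¬p3 ∧ ¬e13 ∧ (pp ∨ P1) ∧ (p2 ∨ e12)) ∨
      (p2 ∧ ¬p3 ∧ ¬e23 ∧ (pp ∨ P2) ∧ (p1 ∨ e12)) ∨
      (P1 ∧ ¬P3 ∧ ¬e13 ∧ (pp ∨ p1) ∧ (P2 ∨ e12)) ∨
      (P2 ∧ ¬P3 ∧ ¬e23 ∧ (pp ∨ p2) ∧ (P1 ∨ e12))) : False := by
  have hfalse := corePC_false (decide p1) (decide p2) (decide p3) (decide P1) (decide P2)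
    (decide P3) (decide e12) (decide e13) (decide e23) (decide pp)
  have htrue : corePC (decide p1) (decide p2) (decide p3) (decide P1) (decide P2)
      (decide P3) (decide e12) (decide e13) (decide e23) (decide pp) = true := by
    rw [corePC]
    simp only [Bool.and_eq_true, Bool.or_eq_true, Bool.not_eq_true', Bool.and_eq_false_iff,
      decide_eq_true_eq, decide_eq_false_iff_not, Bool.not_eq_true]
    refine ⟨?_, ?_, ?_, ?_, ?_, ?_, ?_, ?_, ?_, ?_⟩
    · by_cases hp : p1
      · exact Or.inr (by simpa [hp] using fun hP => h1 ⟨hp, hP⟩)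
      · exact Or.inl (by simpa using hp)
    · by_cases hp : p2
      · exact Or.inr (by simpa [hp] using fun hP => h2 ⟨hp, hP⟩)
      · exact Or.inl (by simpa using hp)
    · by_cases hp : p3
      · exact Or.inr (by simpa [hp] using fun hP => h3 ⟨hp, hP⟩)
      · exact Or.inl (by simpa using hp)
    · simpa [or_assoc] using hc2p
    · simpa [or_assoc] using hc2P
    · simpa [or_assoc] using hdp
    · simpa [or_assoc] using hdP
    · simpa [or_assoc, and_assoc] using hq1
    · simpa [or_assoc, and_assoc] using hq2
    · simpa [or_assoc, and_assoc] using hq3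
  rw [hfalse] at htrue
  exact Bool.false_ne_true htrue



theorem caseTwoThree (G : SimpleGraph V) (v a b p P q1 q2 q3 : V) (Aa Ab : Finset V)
    (hva : ¬G.Adj v a) (hvb : ¬G.Adj v b) (hab : G.Adj a b)
    (hvAa : ∀ u ∈ Aa, G.Adj v u) (hvAb : ∀ u ∈ Ab, G.Adj v u)
    (hNa : ∀ u, G.Adj a u ↔ (u = b ∨ u ∈ Aa))
    (hNb : ∀ u, G.Adj b u ↔ (u = a ∨ u ∈ Ab))
    (hdisj : ∀ u, u ∈ Aa → u ∈ Ab → False)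
    (hPAIR : ∀ w : V, ∃ x y, x ≠ w ∧ y ≠ w ∧ G.Adj x y ∧
      (∀ u, u ≠ w → G.Adj u x ∨ G.Adj u y) ∧ ¬G.Adj w x ∧ ¬G.Adj w y)
    (hF2 : ∀ x y : V, ∃ u, ¬G.Adj u x ∧ ¬G.Adj u y)
    (huniv : ∀ u : V, u = v ∨ u = a ∨ u = b ∨ u ∈ Aa ∨ u ∈ Ab)
    (hp : p ∈ Aa) (hP : P ∈ Aa) (hpP : p ≠ P) (hAa2 : ∀ u ∈ Aa, u = p ∨ u = P)
    (hq1 : q1 ∈ Ab) (hq2 : q2 ∈ Ab) (hq3 : q3 ∈ Ab)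
    (hq12 : q1 ≠ q2) (hq13 : q1 ≠ q3) (hq23 : q2 ≠ q3)
    (hAb3 : ∀ u ∈ Ab, u = q1 ∨ u = q2 ∨ u = q3) : False := by
  -- basic facts
  have hAbv : ∀ u ∈ Ab, u ≠ v := by rintro u hu rfl; exact G.irrefl (hvAb u hu)
  have hAba : ∀ u ∈ Ab, u ≠ a := by rintro u hu rfl; exact hva (hvAb u hu)
  have hAbb : ∀ u ∈ Ab, u ≠ b := by rintro u hu rfl; exact hvb (hvAb u hu)
  have hAav : ∀ u ∈ Aa, u ≠ v := by rintro u hu rfl; exact G.irrefl (hvAa u hu)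
  have hAaa : ∀ u ∈ Aa, u ≠ a := by rintro u hu rfl; exact hva (hvAa u hu)
  have hAab : ∀ u ∈ Aa, u ≠ b := by rintro u hu rfl; exact hvb (hvAa u hu)
  have hbAa : ∀ u ∈ Aa, ¬G.Adj b u := fun u hu h =>
    ((hNb u).mp h).elim (hAaa u hu) (hdisj u hu)
  have haAb : ∀ u ∈ Ab, ¬G.Adj a u := fun u hu h =>
    ((hNa u).mp h).elim (hAbb u hu) (fun h' => hdisj u h' hu)
  -- C1 : no vertex of Ab is adjacent to both p and P
  have disjq : ∀ q ∈ Ab, ¬G.Adj p q ∨ ¬G.Adj P q := by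
    intro q hq
    obtain ⟨u, hub, huq⟩ := hF2 b q
    rcases huniv u with rfl | rfl | rfl | hu | hu
    · exact absurd (hvAb q hq) huq
    · exact absurd hab hub
    · exact absurd ((hNb q).mpr (Or.inr hq)) huq
    · rcases hAa2 u hu with rfl | rfl
      · exact Or.inl huq
      · exact Or.inr huq
    · exact absurd (((hNb u).mpr (Or.inr hu)).symm) hub
  -- C2 : each of p, P misses some vertex of Ab
  have c2 : ∀ x ∈ Aa, ∃ q ∈ Ab, ¬G.Adj x q := by
    intro x hx
    obtain ⟨u, hua, hux⟩ := hF2 a x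
    rcases huniv u with rfl | rfl | rfl | hu | hu
    · exact absurd (hvAa x hx) hux
    · exact absurd ((hNa x).mpr (Or.inr hx)) hux
    · exact absurd hab.symm hua
    · exact absurd (((hNa u).mpr (Or.inr hu)).symm) hua
    · exact ⟨u, hu, fun h => hux h.symm⟩
  -- D at p and at P : the other vertex of Aa has a neighbour in Ab
  have keyD : ∀ x X : V, x ∈ Aa → X ∈ Aa → x ≠ X → (∀ u ∈ Aa, u = x ∨ u = X) →
      ∃ q ∈ Ab, G.Adj X q := by
    intro x X hx hX hxX henum
    obtain ⟨x', y', hx'w, hy'w, hadj, hdom, hwx, hwy⟩ := hPAIR x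
    have key2 : ∀ z y : V, z ≠ x → y ≠ x → G.Adj z y →
        (∀ u, u ≠ x → G.Adj u z ∨ G.Adj u y) → ¬G.Adj x z → ¬G.Adj x y →
        G.Adj a z → ∃ q ∈ Ab, G.Adj X q := by
      intro z y hzx hyx hadj hdom hxz hxy haz
      rcases (hNa z).mp haz with rfl | hz
      · -- z = b
        rcases (hNb y).mp hadj with rfl | hy
        · rcases hdom v (Ne.symm (hAav x hx)) with h | h
          · exact absurd h hvb
          · exact absurd h hva
        · rcases hdom X (fun h => hxX h.symm) with h | h
          · exact absurd ((hNb X).mp h.symm) (not_or_intro (hAaa X hX) (hdisj X hX))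
          · exact ⟨y, hy, h⟩
      · -- z ∈ Aa, so z = X (z ≠ x)
        have hzX : z = X := (henum z hz).resolve_left hzx
        subst hzX
        rcases huniv y with rfl | rfl | rfl | hy | hy
        · exact absurd ((hvAa x hx).symm) hxy
        · exact absurd ((hNa x).mpr (Or.inr hx)).symm hxy
        · exact absurd hadj (fun h => hbAa z hz h.symm)
        · rcases henum y hy with rfl | rfl
          · exact absurd rfl hyx
          · exact absurd hadj G.irrefl
        · exact ⟨y, hy, hadj⟩
    rcases hdom a (Ne.symm (hAaa x hx)) with h | h
    · exact key2 x' y' hx'w hy'w hadj hdom hwx hwy h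
    · exact key2 y' x' hy'w hx'w hadj.symm (fun u hu => (hdom u hu).symm) hwy hwx h
  -- D at a vertex w of Ab
  have keyQ : ∀ w qA qB : V, ∀ EA EB EC : Prop,
      (EA ↔ G.Adj w qA) → (EB ↔ G.Adj w qB) → (EC ↔ G.Adj qA qB) →
      w ∈ Ab → qA ∈ Ab → qB ∈ Ab → qA ≠ w → qB ≠ w → qA ≠ qB →
      (∀ u ∈ Ab, u = w ∨ u = qA ∨ u = qB) →
      (G.Adj p qA ∧ G.Adj p qB ∧ ¬G.Adj p w) ∨ (G.Adj P qA ∧ G.Adj P qB ∧ ¬G.Adj P w) ∨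
      (G.Adj p qA ∧ ¬G.Adj p w ∧ ¬EA ∧ (G.Adj p P ∨ G.Adj P qA) ∧ (G.Adj p qB ∨ EC)) ∨
      (G.Adj p qB ∧ ¬G.Adj p w ∧ ¬EB ∧ (G.Adj p P ∨ G.Adj P qB) ∧ (G.Adj p qA ∨ EC)) ∨
      (G.Adj P qA ∧ ¬G.Adj P w ∧ ¬EA ∧ (G.Adj p P ∨ G.Adj p qA) ∧ (G.Adj P qB ∨ EC)) ∨
      (G.Adj P qB ∧ ¬G.Adj P w ∧ ¬EB ∧ (G.Adj p P ∨ G.Adj p qB) ∧ (G.Adj P qA ∨ EC)) := by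
    intro w qA qB EA EB EC hEA hEB hEC hw hqA hqB hqAw hqBw hqAB henum
    obtain ⟨x', y', hx'w, hy'w, hadj, hdom, hwx, hwy⟩ := hPAIR w
    have key3 : ∀ z y : V, z ≠ w → y ≠ w → G.Adj z y →
        (∀ u, u ≠ w → G.Adj u z ∨ G.Adj u y) → ¬G.Adj w z → ¬G.Adj w y →
        G.Adj a z →
        ((G.Adj p qA ∧ G.Adj p qB ∧ ¬G.Adj p w) ∨ (G.Adj P qA ∧ G.Adj P qB ∧ ¬G.Adj P w) ∨
        (G.Adj p qA ∧ ¬G.Adj p w ∧ ¬EA ∧ (G.Adj p P ∨ G.Adj P qA) ∧ (G.Adj p qB ∨ EC)) ∨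
        (G.Adj p qB ∧ ¬G.Adj p w ∧ ¬EB ∧ (G.Adj p P ∨ G.Adj P qB) ∧ (G.Adj p qA ∨ EC)) ∨
        (G.Adj P qA ∧ ¬G.Adj P w ∧ ¬EA ∧ (G.Adj p P ∨ G.Adj p qA) ∧ (G.Adj P qB ∨ EC)) ∨
        (G.Adj P qB ∧ ¬G.Adj P w ∧ ¬EB ∧ (G.Adj p P ∨ G.Adj p qB) ∧ (G.Adj P qA ∨ EC))) := by
      intro z y hzw hyw hadj hdom hwz hwy haz
      rcases (hNa z).mp haz with rfl | hz
      · -- z = b; impossible since w ∈ Ab is adjacent to b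
        exact absurd (((hNb w).mpr (Or.inr hw)).symm) hwz
      · -- z ∈ Aa
        have hzw' : ¬G.Adj z w := fun h => hwz h.symm
        rcases huniv y with rfl | rfl | rfl | hy | hy
        · exact absurd ((hvAb w hw).symm) hwy
        · -- y = a : type (i)
          have hzqA : G.Adj z qA := by
            rcases hdom qA hqAw with h | h
            · exact h.symm
            · exact absurd h.symm (haAb qA hqA)
          have hzqB : G.Adj z qB := by
            rcases hdom qB hqBw with h | h
            · exact h.symm
            · exact absurd h.symm (haAb qB hqB)
          rcases hAa2 z hz with rfl | rfl
          · exact Or.inl ⟨hzqA, hzqB, hzw'⟩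
          · exact Or.inr (Or.inl ⟨hzqA, hzqB, hzw'⟩)
        · -- y = b : impossible, z ∈ Aa not adjacent to b
          exact absurd hadj (fun h => hbAa z hz h.symm)
        · -- y ∈ Aa : pair inside Aa, b is not dominated
          rcases hdom b (Ne.symm (hAbb w hw)) with h | h
          · exact absurd h (hbAa z hz)
          · exact absurd h (hbAa y hy)
        · -- y ∈ Ab : type (iii)
          have hy' : y = qA ∨ y = qB := (henum y hy).resolve_left hyw
          -- the other vertex of Aa
          have hother : ∀ z' : V, z' ∈ Aa → z' ≠ z → G.Adj p P ∨ G.Adj z' y := by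
            intro z' hz' hz'z
            rcases hdom z' (fun h => hdisj z' hz' (by rw [h]; exact hw)) with h | h
            · left
              rcases hAa2 z hz with rfl | rfl
              · rcases hAa2 z' hz' with rfl | rfl
                · exact absurd rfl hz'z
                · exact h.symm
              · rcases hAa2 z' hz' with rfl | rfl
                · exact h
                · exact absurd rfl hz'z
            · exact Or.inr h
          rcases hy' with rfl | rfl
          · -- y = qA
            have hqBdom : G.Adj z qB ∨ EC := by
              rcases hdom qB hqBw with h | h
              · exact Or.inl h.symm
              · exact Or.inr (hEC.mpr h.symm)
            have hEA' : ¬EA := fun h => hwy (hEA.mp h)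
            rcases hAa2 z hz with rfl | rfl
            · refine Or.inr (Or.inr (Or.inl ⟨hadj, hzw', hEA', ?_, hqBdom⟩))
              exact hother P hP (Ne.symm hpP)
            · refine Or.inr (Or.inr (Or.inr (Or.inr (Or.inl ⟨hadj, hzw', hEA', ?_, hqBdom⟩))))
              exact hother p hp hpP
          · -- y = qB
            have hqAdom : G.Adj z qA ∨ EC := by
              rcases hdom qA hqAw with h | h
              · exact Or.inl h.symm
              · exact Or.inr (hEC.mpr h)
            have hEB' : ¬EB := fun h => hwy (hEB.mp h)
            rcases hAa2 z hz with rfl | rfl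
            · refine Or.inr (Or.inr (Or.inr (Or.inl ⟨hadj, hzw', hEB', ?_, hqAdom⟩)))
              exact hother P hP (Ne.symm hpP)
            · refine Or.inr (Or.inr (Or.inr (Or.inr (Or.inr ⟨hadj, hzw', hEB', ?_, hqAdom⟩))))
              exact hother p hp hpP
    rcases hdom a (Ne.symm (hAba w hw)) with h | h
    · exact key3 x' y' hx'w hy'w hadj hdom hwx hwy h
    · exact key3 y' x' hy'w hx'w hadj.symm (fun u hu => (hdom u hu).symm) hwy hwx h
  -- Assemble and finish with the propositional core
  have hD1 := keyQ q1 q2 q3 (G.Adj q1 q2) (G.Adj q1 q3) (G.Adj q2 q3) Iff.rfl Iff.rfl Iff.rfl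
    hq1 hq2 hq3 (Ne.symm hq12) (Ne.symm hq13) hq23
    (fun u hu => hAb3 u hu)
  have hD2 := keyQ q2 q1 q3 (G.Adj q1 q2) (G.Adj q2 q3) (G.Adj q1 q3)
    (G.adj_comm q1 q2) Iff.rfl Iff.rfl
    hq2 hq1 hq3 hq12 (Ne.symm hq23) hq13
    (fun u hu => ((hAb3 u hu).elim (fun h => Or.inr (Or.inl h))
      (fun h => h.elim Or.inl (fun h => Or.inr (Or.inr h)))))
  have hD3 := keyQ q3 q1 q2 (G.Adj q1 q3) (G.Adj q2 q3) (G.Adj q1 q2)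
    (G.adj_comm q1 q3) (G.adj_comm q2 q3) Iff.rfl
    hq3 hq1 hq2 hq13 hq23 hq12
    (fun u hu => ((hAb3 u hu).elim (fun h => Or.inr (Or.inl h))
      (fun h => h.elim (fun h => Or.inr (Or.inr h)) Or.inl)))
  -- C2 instances
  have hc2p : ¬G.Adj p q1 ∨ ¬G.Adj p q2 ∨ ¬G.Adj p q3 := by
    obtain ⟨q, hq, hnq⟩ := c2 p hp
    rcases hAb3 q hq with rfl | rfl | rfl
    · exact Or.inl hnq
    · exact Or.inr (Or.inl hnq)
    · exact Or.inr (Or.inr hnq)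
  have hc2P : ¬G.Adj P q1 ∨ ¬G.Adj P q2 ∨ ¬G.Adj P q3 := by
    obtain ⟨q, hq, hnq⟩ := c2 P hP
    rcases hAb3 q hq with rfl | rfl | rfl
    · exact Or.inl hnq
    · exact Or.inr (Or.inl hnq)
    · exact Or.inr (Or.inr hnq)
  have hdp : G.Adj P q1 ∨ G.Adj P q2 ∨ G.Adj P q3 := by
    obtain ⟨q, hq, hadj⟩ := keyD p P hp hP hpP hAa2
    rcases hAb3 q hq with rfl | rfl | rfl
    · exact Or.inl hadj
    · exact Or.inr (Or.inl hadj)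
    · exact Or.inr (Or.inr hadj)
  have hdP : G.Adj p q1 ∨ G.Adj p q2 ∨ G.Adj p q3 := by
    obtain ⟨q, hq, hadj⟩ := keyD P p hP hp (Ne.symm hpP) (fun u hu => (hAa2 u hu).symm)
    rcases hAb3 q hq with rfl | rfl | rfl
    · exact Or.inl hadj
    · exact Or.inr (Or.inl hadj)
    · exact Or.inr (Or.inr hadj)
  exact finalProp (G.Adj p q1) (G.Adj p q2) (G.Adj p q3) (G.Adj P q1) (G.Adj P q2) (G.Adj P q3)
    (G.Adj q1 q2) (G.Adj q1 q3) (G.Adj q2 q3) (G.Adj p P)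
    (fun h => (disjq q1 hq1).elim (· h.1) (· h.2))
    (fun h => (disjq q2 hq2).elim (· h.1) (· h.2))
    (fun h => (disjq q3 hq3).elim (· h.1) (· h.2))
    hc2p hc2P hdp hdP hD1 hD2 hD3


theorem caseOne (G : SimpleGraph V) (v a b p w w' : V) (Aa Ab : Finset V)
    (hva : ¬G.Adj v a) (hvb : ¬G.Adj v b) (hab : G.Adj a b)
    (hvAa : ∀ u ∈ Aa, G.Adj v u) (hvAb : ∀ u ∈ Ab, G.Adj v u)
    (hNa : ∀ u, G.Adj a u ↔ (u = b ∨ u ∈ Aa))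
    (hNb : ∀ u, G.Adj b u ↔ (u = a ∨ u ∈ Ab))
    (hdisj : ∀ u, u ∈ Aa → u ∈ Ab → False)
    (hPAIR : ∀ w : V, ∃ x y, x ≠ w ∧ y ≠ w ∧ G.Adj x y ∧
      (∀ u, u ≠ w → G.Adj u x ∨ G.Adj u y) ∧ ¬G.Adj w x ∧ ¬G.Adj w y)
    (hF2 : ∀ x y : V, ∃ u, ¬G.Adj u x ∧ ¬G.Adj u y)
    (huniv : ∀ u : V, u = v ∨ u = a ∨ u = b ∨ u ∈ Aa ∨ u ∈ Ab)
    (hp : p ∈ Aa) (hAa1 : ∀ u ∈ Aa, u = p)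
    (hw : w ∈ Ab) (hw' : w' ∈ Ab) (hww' : w' ≠ w) : False := by
  have hAbv : ∀ u ∈ Ab, u ≠ v := by
    rintro u hu rfl; exact G.irrefl (hvAb u hu)
  have hAba : ∀ u ∈ Ab, u ≠ a := by
    rintro u hu rfl; exact hva (hvAb u hu)
  have hAbb : ∀ u ∈ Ab, u ≠ b := by
    rintro u hu rfl; exact hvb (hvAb u hu)
  have hpv : p ≠ v := by rintro rfl; exact G.irrefl (hvAa p hp)
  have hpa : p ≠ a := by rintro rfl; exact hva (hvAa p hp)
  have hpb' : ¬G.Adj b p := by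
    intro h
    rcases (hNb p).mp h with rfl | h
    · exact hpa rfl
    · exact hdisj p hp h
  -- p is adjacent to no vertex of Ab
  have step1 : ∀ q ∈ Ab, ¬G.Adj p q := by
    intro q hq hpq
    obtain ⟨u, hub, huq⟩ := hF2 b q
    rcases huniv u with rfl | rfl | rfl | hu | hu
    · exact huq (hvAb q hq)
    · exact hub hab
    · exact huq ((hNb q).mpr (Or.inr hq))
    · rw [hAa1 u hu] at huq; exact huq hpq
    · exact hub (((hNb u).mpr (Or.inr hu)).symm)
  have key : ∀ x y : V, G.Adj x y → (∀ u, u ≠ w → G.Adj u x ∨ G.Adj u y) →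
      ¬G.Adj w x → ¬G.Adj w y → G.Adj p x → False := by
    intro x y hadj hdom hwx hwy hpx
    rcases huniv x with rfl | rfl | rfl | hx | hx
    · -- x = v
      have hay : G.Adj a y := by
        rcases hdom a (Ne.symm (hAba w hw)) with h | h
        · exact absurd h.symm hva
        · exact h
      rcases (hNa y).mp hay with rfl | hy
      · exact hvb hadj
      · rw [hAa1 y hy] at hadj
        rcases hdom b (Ne.symm (hAbb w hw)) with h | h
        · exact hvb h.symm
        · rw [hAa1 y hy] at h; exact hpb' h
    · -- x = a
      rcases (hNa y).mp hadj with rfl | hy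
      · rcases hdom v (Ne.symm (hAbv w hw)) with h | h
        · exact hva h
        · exact hvb h
      · rw [hAa1 y hy] at hdom
        rcases hdom w' hww' with h | h
        · rcases (hNa w').mp h.symm with rfl | h'
          · exact hvb (hvAb w' hw')
          · exact hdisj w' h' hw'
        · exact step1 w' hw' h.symm
    · -- x = b
      exact hpb' hpx.symm
    · -- x ∈ Aa, so x = p
      rw [hAa1 x hx] at hpx; exact G.irrefl hpx
    · exact step1 x hx hpx
  obtain ⟨x, y, hxw, hyw, hadj, hdom, hwx, hwy⟩ := hPAIR w
  have hpw : p ≠ w := fun h => hdisj p hp (h ▸ hw)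
  rcases hdom p hpw with h | h
  · exact key x y hadj hdom hwx hwy h
  · exact key y x hadj.symm (fun u hu => (hdom u hu).symm) hwy hwx h


-- F2: no pair of vertices totally dominates G
theorem noPair {V : Type*} [Fintype V] (G : SimpleGraph V) (hm : G.totalDomNum = 3)
    (x y : V) : ∃ u : V, ¬ G.Adj u x ∧ ¬ G.Adj u y := by
  by_contra h
  push_neg at h
  have hS : G.IsTotalDomSet ↑({x, y} : Finset V) := by
    intro u
    by_cases hx : G.Adj u x
    · exact ⟨x, by simp, hx⟩
    · exact ⟨y, by simp, h u hx⟩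
  have hmem : ({x, y} : Finset V).card ∈ {n : ℕ | ∃ S : Finset V, G.IsTotalDomSet ↑S ∧ S.card = n} :=
    ⟨{x, y}, hS, rfl⟩
  have hle := Nat.sInf_le hmem
  rw [show sInf {n : ℕ | ∃ S : Finset V, G.IsTotalDomSet ↑S ∧ S.card = n} = G.totalDomNum from rfl, hm] at hle
  have : ({x, y} : Finset V).card ≤ 2 := Finset.card_insert_le _ _ |>.trans (by simp)
  omega

-- F1 + F2 combined: the dominating pair of G - w
theorem pairAfter {V : Type*} [Fintype V] (G : SimpleGraph V)
    (hcrit : G.IsTotalDomCritical) (hm : G.totalDomNum = 3)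
    (hδ : 2 ≤ G.minDegree) (hcard : 2 ≤ Fintype.card V) (w : V) :
    ∃ x y : V, x ≠ w ∧ y ≠ w ∧ G.Adj x y ∧
      (∀ u : V, u ≠ w → G.Adj u x ∨ G.Adj u y) ∧ ¬ G.Adj w x ∧ ¬ G.Adj w y := by
  have hdeg : ∀ u : V, 2 ≤ G.degree u := fun u => hδ.trans (G.minDegree_le_degree u)
  have hns : ¬ G.IsSupportVertex w := by
    rintro ⟨u, -, hu⟩
    have := hdeg u
    omega
  have hlt := hcrit.2 w hns
  rw [hm] at hlt
  -- the set of achievable sizes for G - w is nonempty: univ works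
  have hne : {n : ℕ | ∃ S : Finset {u : V // u ≠ w}, (G.deleteVert w).IsTotalDomSet ↑S ∧ S.card = n}.Nonempty := by
    refine ⟨_, Finset.univ, ?_, rfl⟩
    intro u
    -- u has a neighbor different from w
    have h2 : 2 ≤ (G.neighborFinset (u : V)).card := hdeg (u : V)
    have : ((G.neighborFinset (u : V)).erase w).Nonempty := by
      rw [← Finset.card_pos]
      have := Finset.card_erase_of_mem (a := w) (s := G.neighborFinset (u : V))
      by_cases hw : w ∈ G.neighborFinset (u : V)
      · rw [Finset.card_erase_of_mem hw]; omega
      · rw [Finset.erase_eq_of_notMem hw]; omega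
    obtain ⟨z, hz⟩ := this
    rw [Finset.mem_erase, mem_neighborFinset] at hz
    exact ⟨⟨z, hz.1⟩, by simp, hz.2⟩
  have hmem := Nat.sInf_mem hne
  obtain ⟨S, hS, hcardS⟩ := hmem
  have hS2 : S.card ≤ 2 := by
    rw [hcardS]
    exact Nat.lt_succ_iff.mp hlt
  -- S is nonempty
  obtain ⟨u0, hu0⟩ := Fintype.exists_ne_of_one_lt_card (by omega) w
  obtain ⟨z0, hz0, -⟩ := hS ⟨u0, hu0⟩
  have hS1 : 1 ≤ S.card := Finset.card_pos.mpr ⟨z0, hz0⟩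
  -- S has card 2 (card 1 impossible)
  have hScard : S.card = 2 := by
    rcases Nat.lt_or_ge S.card 2 with h | h
    · exfalso
      have h1 : S.card = 1 := by omega
      obtain ⟨z, hz⟩ := Finset.card_eq_one.mp h1
      obtain ⟨z', hz', hadj⟩ := hS z
      rw [hz, Finset.coe_singleton, Set.mem_singleton_iff] at hz'
      subst hz'
      exact (G.deleteVert w).irrefl hadj
    · omega
  obtain ⟨x, y, hxy, hSxy⟩ := Finset.card_eq_two.mp hScard
  -- x is adjacent to y
  obtain ⟨z, hz, hadjx⟩ := hS x
  rw [hSxy] at hz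
  simp only [Finset.coe_insert, Set.mem_insert_iff, Finset.coe_singleton,
    Set.mem_singleton_iff] at hz
  have hadjxy : (G.deleteVert w).Adj x y := by
    rcases hz with rfl | rfl
    · exact absurd hadjx (G.deleteVert w).irrefl
    · exact hadjx
  have hadjxy' : G.Adj (x : V) (y : V) := hadjxy
  have hdom : ∀ u : V, u ≠ w → G.Adj u (x : V) ∨ G.Adj u (y : V) := by
    intro u hu
    obtain ⟨z, hz, hadj⟩ := hS ⟨u, hu⟩
    rw [hSxy] at hz
    simp only [Finset.coe_insert, Set.mem_insert_iff, Finset.coe_singleton,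
      Set.mem_singleton_iff] at hz
    rcases hz with rfl | rfl
    · exact Or.inl hadj
    · exact Or.inr hadj
  -- w is not adjacent to x nor y, using noPair
  obtain ⟨u, hux, huy⟩ := noPair G hm (x : V) (y : V)
  have huw : u = w := by
    by_contra hne
    rcases hdom u hne with h | h
    · exact hux h
    · exact huy h
  subst huw
  exact ⟨x, y, x.2, y.2, hadjxy', hdom, hux, huy⟩



set_option maxHeartbeats 1000000 in
/-- there is no `3`-`γₜ`-critical graph of order `Δ(G) + 3` with
`δ(G) ≥ 2` and `Δ(G) = 3` or `Δ(G) = 5`. -/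
theorem stmt6 {V : Type*} [Fintype V] (G : SimpleGraph V)
    (hcrit : G.IsTotalDomCritical) (hm : G.totalDomNum = 3)
    (hn : Fintype.card V = G.maxDegree + 3)
    (hδ : 2 ≤ G.minDegree)
    (hΔ : G.maxDegree = 3 ∨ G.maxDegree = 5) : False := by
  classical
  set Δ := G.maxDegree with hΔdef
  have hΔ3 : 3 ≤ Δ := by omega
  have hcard : Fintype.card V = Δ + 3 := hn
  have hne : Nonempty V := by
    rw [← Fintype.card_pos_iff]; omega
  obtain ⟨v, hv⟩ := G.exists_maximal_degree_vertex
  have hdeg2 : ∀ u : V, 2 ≤ G.degree u := fun u => hδ.trans (G.minDegree_le_degree u)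
  have hdegle : ∀ u : V, G.degree u ≤ Δ := fun u => G.degree_le_maxDegree u
  have hF2 : ∀ x y : V, ∃ u, ¬G.Adj u x ∧ ¬G.Adj u y := noPair G hm
  have hPAIR : ∀ w : V, ∃ x y, x ≠ w ∧ y ≠ w ∧ G.Adj x y ∧
      (∀ u, u ≠ w → G.Adj u x ∨ G.Adj u y) ∧ ¬G.Adj w x ∧ ¬G.Adj w y :=
    pairAfter G hcrit hm hδ (by omega)
  set A := G.neighborFinset v with hAdef
  have hvA : v ∉ A := by simp [hAdef]
  have hcardA : A.card = Δ :=
    (G.card_neighborFinset_eq_degree v).trans hv.symm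
  have hcardins : (insert v A).card = Δ + 1 := by
    rw [Finset.card_insert_of_notMem hvA, hcardA]
  have hcardBc : (insert v A)ᶜ.card = 2 := by
    rw [Finset.card_compl, hcardins, hcard]; omega
  obtain ⟨a, b, habne, hBc⟩ := Finset.card_eq_two.mp hcardBc
  have haBc : a ∈ (insert v A)ᶜ := by rw [hBc]; simp
  have hbBc : b ∈ (insert v A)ᶜ := by rw [hBc]; simp
  rw [Finset.mem_compl, Finset.mem_insert, not_or] at haBc hbBc
  have hva : ¬G.Adj v a := fun h => haBc.2 (G.mem_neighborFinset v a |>.mpr h)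
  have hvb : ¬G.Adj v b := fun h => hbBc.2 (G.mem_neighborFinset v b |>.mpr h)
  have hmemA : ∀ u : V, u ∈ A ↔ G.Adj v u := fun u => G.mem_neighborFinset v u
  have huniv0 : ∀ u : V, u = v ∨ u ∈ A ∨ u = a ∨ u = b := by
    intro u
    by_cases h : u ∈ insert v A
    · rcases Finset.mem_insert.mp h with rfl | h'
      · exact Or.inl rfl
      · exact Or.inr (Or.inl h')
    · have : u ∈ (insert v A)ᶜ := Finset.mem_compl.mpr h
      rw [hBc, Finset.mem_insert, Finset.mem_singleton] at this
      exact Or.inr (Or.inr this)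
  -- deleting v : the dominating pair must be {a, b}
  obtain ⟨x, y, hxv, hyv, hxyadj, hxydom, hvx, hvy⟩ := hPAIR v
  have hx' : x = a ∨ x = b := by
    rcases huniv0 x with rfl | h | rfl | rfl
    · exact absurd rfl hxv
    · exact absurd ((hmemA x).mp h) hvx
    · exact Or.inl rfl
    · exact Or.inr rfl
  have hy' : y = a ∨ y = b := by
    rcases huniv0 y with rfl | h | rfl | rfl
    · exact absurd rfl hyv
    · exact absurd ((hmemA y).mp h) hvy
    · exact Or.inl rfl
    · exact Or.inr rfl
  have hxyne : x ≠ y := G.ne_of_adj hxyadj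
  have hab : G.Adj a b := by
    rcases hx' with rfl | rfl <;> rcases hy' with rfl | rfl
    · exact absurd rfl hxyne
    · exact hxyadj
    · exact hxyadj.symm
    · exact absurd rfl hxyne
  have hdomab : ∀ u : V, u ≠ v → G.Adj u a ∨ G.Adj u b := by
    intro u hu
    rcases hx' with rfl | rfl <;> rcases hy' with rfl | rfl
    · exact absurd rfl hxyne
    · exact hxydom u hu
    · exact (hxydom u hu).symm
    · exact absurd rfl hxyne
  -- each vertex of A is adjacent to exactly one of a, b
  have honeside : ∀ w ∈ A, ¬G.Adj a w ∨ ¬G.Adj b w := by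
    intro w hw
    obtain ⟨u, huw, huv⟩ := hF2 w v
    rcases huniv0 u with rfl | h | rfl | rfl
    · exact absurd ((hmemA w).mp hw) huw
    · exact absurd ((hmemA u).mp h).symm huv
    · exact Or.inl huw
    · exact Or.inr huw
  set Aa := A.filter (fun u => G.Adj a u) with hAadef
  set Ab := A.filter (fun u => G.Adj b u) with hAbdef
  have hvAa : ∀ u ∈ Aa, G.Adj v u := fun u hu => (hmemA u).mp (Finset.mem_filter.mp hu).1
  have hvAb : ∀ u ∈ Ab, G.Adj v u := fun u hu => (hmemA u).mp (Finset.mem_filter.mp hu).1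
  have habne' : a ≠ b := habne
  have hNa : ∀ u, G.Adj a u ↔ (u = b ∨ u ∈ Aa) := by
    intro u
    constructor
    · intro h
      rcases huniv0 u with rfl | hu | rfl | rfl
      · exact absurd h.symm hva
      · exact Or.inr (Finset.mem_filter.mpr ⟨hu, h⟩)
      · exact absurd h G.irrefl
      · exact Or.inl rfl
    · rintro (rfl | hu)
      · exact hab
      · exact (Finset.mem_filter.mp hu).2
  have hNb : ∀ u, G.Adj b u ↔ (u = a ∨ u ∈ Ab) := by
    intro u
    constructor
    · intro h
      rcases huniv0 u with rfl | hu | rfl | rfl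
      · exact absurd h.symm hvb
      · exact Or.inr (Finset.mem_filter.mpr ⟨hu, h⟩)
      · exact Or.inl rfl
      · exact absurd h G.irrefl
    · rintro (rfl | hu)
      · exact hab.symm
      · exact (Finset.mem_filter.mp hu).2
  have hdisj : ∀ u, u ∈ Aa → u ∈ Ab → False := by
    intro u hua hub
    rcases honeside u (Finset.mem_filter.mp hua).1 with h | h
    · exact h (Finset.mem_filter.mp hua).2
    · exact h (Finset.mem_filter.mp hub).2
  have huniv : ∀ u : V, u = v ∨ u = a ∨ u = b ∨ u ∈ Aa ∨ u ∈ Ab := by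
    intro u
    rcases huniv0 u with rfl | hu | rfl | rfl
    · exact Or.inl rfl
    · have huv : u ≠ v := fun h => hvA (h ▸ hu)
      rcases hdomab u huv with h | h
      · exact Or.inr (Or.inr (Or.inr (Or.inl (Finset.mem_filter.mpr ⟨hu, h.symm⟩))))
      · exact Or.inr (Or.inr (Or.inr (Or.inr (Finset.mem_filter.mpr ⟨hu, h.symm⟩))))
    · exact Or.inr (Or.inl rfl)
    · exact Or.inr (Or.inr (Or.inl rfl))
  -- cardinalities
  have haA : a ∉ A := haBc.2
  have hbA : b ∉ A := hbBc.2
  have hAun : Aa ∪ Ab = A := by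
    ext u
    simp only [Finset.mem_union, hAadef, hAbdef, Finset.mem_filter]
    constructor
    · rintro (h | h) <;> exact h.1
    · intro hu
      have huv : u ≠ v := fun h => hvA (h ▸ hu)
      rcases hdomab u huv with h | h
      · exact Or.inl ⟨hu, h.symm⟩
      · exact Or.inr ⟨hu, h.symm⟩
  have hdisj' : Disjoint Aa Ab := Finset.disjoint_left.mpr (fun {u} hua hub => hdisj u hua hub)
  have hcardsum : Aa.card + Ab.card = Δ := by
    rw [← Finset.card_union_of_disjoint hdisj', hAun, hcardA]
  have hbAa : b ∉ Aa := fun h => hbA (Finset.filter_subset _ _ h)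
  have haAb : a ∉ Ab := fun h => haA (Finset.filter_subset _ _ h)
  have hNFa : G.neighborFinset a = insert b Aa := by
    ext u
    rw [G.mem_neighborFinset, hNa u, Finset.mem_insert]
  have hNFb : G.neighborFinset b = insert a Ab := by
    ext u
    rw [G.mem_neighborFinset, hNb u, Finset.mem_insert]
  have hdega : G.degree a = Aa.card + 1 := by
    rw [← G.card_neighborFinset_eq_degree, hNFa, Finset.card_insert_of_notMem hbAa]
  have hdegb : G.degree b = Ab.card + 1 := by
    rw [← G.card_neighborFinset_eq_degree, hNFb, Finset.card_insert_of_notMem haAb]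
  have hAa1 : 1 ≤ Aa.card := by have := hdeg2 a; omega
  have hAb1 : 1 ≤ Ab.card := by have := hdeg2 b; omega
  -- the case analysis
  have huniv' : ∀ u : V, u = v ∨ u = b ∨ u = a ∨ u ∈ Ab ∨ u ∈ Aa := by
    intro u
    rcases huniv u with h | h | h | h | h
    · exact Or.inl h
    · exact Or.inr (Or.inr (Or.inl h))
    · exact Or.inr (Or.inl h)
    · exact Or.inr (Or.inr (Or.inr (Or.inr h)))
    · exact Or.inr (Or.inr (Or.inr (Or.inl h)))
  have case1 : Aa.card = 1 → 2 ≤ Ab.card → False := by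
    intro h1 h2
    obtain ⟨p, hpeq⟩ := Finset.card_eq_one.mp h1
    obtain ⟨w, hw, w', hw', hww'⟩ := Finset.one_lt_card.mp h2
    exact caseOne G v a b p w w' Aa Ab hva hvb hab hvAa hvAb hNa hNb hdisj hPAIR hF2 huniv
      (by rw [hpeq]; simp) (fun u hu => by rwa [hpeq, Finset.mem_singleton] at hu)
      hw hw' hww'.symm
  have case1' : Ab.card = 1 → 2 ≤ Aa.card → False := by
    intro h1 h2
    obtain ⟨p, hpeq⟩ := Finset.card_eq_one.mp h1
    obtain ⟨w, hw, w', hw', hww'⟩ := Finset.one_lt_card.mp h2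
    exact caseOne G v b a p w w' Ab Aa hvb hva hab.symm hvAb hvAa hNb hNa
      (fun u h h' => hdisj u h' h) hPAIR hF2
      huniv'
      (by rw [hpeq]; simp) (fun u hu => by rwa [hpeq, Finset.mem_singleton] at hu)
      hw hw' hww'.symm
  have case23 : Aa.card = 2 → Ab.card = 3 → False := by
    intro h2 h3
    obtain ⟨p, P, hpP, hAaeq⟩ := Finset.card_eq_two.mp h2
    obtain ⟨r1, r2, r3, h12, h13, h23, hAbeq⟩ := Finset.card_eq_three.mp h3
    exact caseTwoThree G v a b p P r1 r2 r3 Aa Ab hva hvb hab hvAa hvAb hNa hNb hdisj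
      hPAIR hF2 huniv
      (by rw [hAaeq]; simp) (by rw [hAaeq]; simp) hpP
      (fun u hu => by rw [hAaeq] at hu; simpa using hu)
      (by rw [hAbeq]; simp) (by rw [hAbeq]; simp) (by rw [hAbeq]; simp)
      h12 h13 h23
      (fun u hu => by rw [hAbeq] at hu; simpa using hu)
  have case23' : Aa.card = 3 → Ab.card = 2 → False := by
    intro h3 h2
    obtain ⟨p, P, hpP, hAbeq⟩ := Finset.card_eq_two.mp h2
    obtain ⟨r1, r2, r3, h12, h13, h23, hAaeq⟩ := Finset.card_eq_three.mp h3
    exact caseTwoThree G v b a p P r1 r2 r3 Ab Aa hvb hva hab.symm hvAb hvAa hNb hNa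
      (fun u h h' => hdisj u h' h) hPAIR hF2
      huniv'
      (by rw [hAbeq]; simp) (by rw [hAbeq]; simp) hpP
      (fun u hu => by rw [hAbeq] at hu; simpa using hu)
      (by rw [hAaeq]; simp) (by rw [hAaeq]; simp) (by rw [hAaeq]; simp)
      h12 h13 h23
      (fun u hu => by rw [hAaeq] at hu; simpa using hu)
  rcases hΔ with h3 | h5
  · rw [h3] at hcardsum
    rcases Nat.lt_or_ge Aa.card 2 with h | h
    · exact case1 (by omega) (by omega)
    · exact case1' (by omega) (by omega)
  · rw [h5] at hcardsum
    rcases Nat.lt_or_ge Aa.card 2 with h | h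
    · exact case1 (by omega) (by omega)
    · rcases Nat.lt_or_ge Aa.card 3 with h' | h'
      · exact case23 (by omega) (by omega)
      · rcases Nat.lt_or_ge Aa.card 4 with h'' | h''
        · exact case23' (by omega) (by omega)
        · exact case1' (by omega) (by omega)

end SimpleGraph
end

section
/- Every γ_t-critical graph G of order n with γ_t(G) = n − Δ(G) and minimum degree δ(G) ≥ 2 is connected. -/
/-!
Let `v` have maximum degree. As `δ(G) ≥ 2` there are no support vertices, so `γₜ(G - v) < γₜ(G)`.
A minimum total dominating set `S` of `G - v` together with one neighbour of `v` totally dominates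
`G`, so `|S| ≥ γₜ(G) - 1 = n - Δ - 1`; and `S` avoids `N(v)`, since otherwise `S` alone would
totally dominate `G`. Hence `S = V ∖ N[v]`: every vertex other than `v` has a neighbour outside
`N[v]`. If some `w` lay outside the component of `v`, then `V ∖ N[v]` minus `w`, plus a neighbour
of `v`, would still totally dominate `G` (vertices away from `v` have a second neighbour besides
`w`), giving `γₜ(G) ≤ n - Δ - 1`.
-/

open scoped Classical

namespace SimpleGraph

variable {V : Type*}

open Finset

variable {G : SimpleGraph V}

theorem isTotalDomSet_of_forall_ne {v u : V} {T : Finset V}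
    (hT : ∀ x, x ≠ v → ∃ y ∈ T, G.Adj x y) (hu : u ∈ T) (hvu : G.Adj v u) :
    G.IsTotalDomSet ↑T := by
  intro x
  by_cases hx : x = v
  · exact ⟨u, hu, hx ▸ hvu⟩
  · exact hT x hx

variable [Fintype V]

noncomputable def closedNeighborFinset (G : SimpleGraph V) (v : V) : Finset V :=
  insert v (G.neighborFinset v)

theorem mem_closedNeighborFinset {v w : V} :
    w ∈ G.closedNeighborFinset v ↔ w = v ∨ G.Adj v w := by
  simp [closedNeighborFinset]

theorem card_closedNeighborFinset_compl (v : V) :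
    #(G.closedNeighborFinset v)ᶜ = Fintype.card V - (G.degree v + 1) := by
  rw [card_compl, closedNeighborFinset, card_insert_of_notMem (by simp),
    card_neighborFinset_eq_degree]

theorem exists_adj_ne_of_two_le_degree {x : V} (h : 2 ≤ G.degree x) (z : V) :
    ∃ y, G.Adj x y ∧ y ≠ z := by
  rw [← card_neighborFinset_eq_degree] at h
  obtain ⟨y, hy, hyz⟩ := exists_mem_ne h z
  exact ⟨y, (mem_neighborFinset _ _ _).1 hy, hyz⟩

theorem IsTotalDomSet.totalDomNum_le {S : Finset V} (hS : G.IsTotalDomSet ↑S) :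
    G.totalDomNum ≤ #S :=
  Nat.sInf_le ⟨S, hS, rfl⟩

theorem exists_isTotalDomSet_card_eq_totalDomNum (h : ∀ x, ∃ y, G.Adj x y) :
    ∃ S : Finset V, G.IsTotalDomSet ↑S ∧ #S = G.totalDomNum :=
  Nat.sInf_mem (s := {n | ∃ S : Finset V, G.IsTotalDomSet ↑S ∧ #S = n})
    ⟨_, univ, fun x => (h x).imp fun y hy => ⟨mem_coe.2 (mem_univ y), hy⟩, rfl⟩

theorem exists_disjoint_closedNeighborFinset_of_totalDomNum_deleteVert_lt {v : V}
    (hdel : ∀ x, ∃ y, G.Adj x y ∧ y ≠ v)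
    (hlt : (G.deleteVert v).totalDomNum < G.totalDomNum) :
    ∃ S : Finset V, (∀ x, x ≠ v → ∃ y ∈ S, G.Adj x y) ∧
      Disjoint S (G.closedNeighborFinset v) ∧ G.totalDomNum ≤ #S + 1 := by
  obtain ⟨S, hS, hScard⟩ := (G.deleteVert v).exists_isTotalDomSet_card_eq_totalDomNum
    fun x => let ⟨y, hxy, hyv⟩ := hdel x; ⟨⟨y, hyv⟩, hxy⟩
  set T := S.map (Function.Embedding.subtype _)
  have hT : ∀ x, x ≠ v → ∃ y ∈ T, G.Adj x y := fun x hx =>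
    let ⟨y, hy, hxy⟩ := hS ⟨x, hx⟩
    ⟨y, mem_map_of_mem _ hy, hxy⟩
  have hTcard : #T = (G.deleteVert v).totalDomNum := by rw [card_map, hScard]
  obtain ⟨u, hvu, -⟩ := hdel v
  refine ⟨T, hT, Finset.disjoint_left.2 fun y hyT hy => ?_, ?_⟩
  · obtain ⟨⟨y, hyv⟩, -, rfl⟩ := mem_map.1 hyT
    rcases mem_closedNeighborFinset.1 hy with hyv' | hvy
    · exact hyv hyv'
    · have := (isTotalDomSet_of_forall_ne hT hyT hvy).totalDomNum_le
      omega
  · exact (isTotalDomSet_of_forall_ne (fun x hx => (hT x hx).imp fun y hy =>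
      ⟨mem_insert_of_mem hy.1, hy.2⟩) (mem_insert_self u T) hvu).totalDomNum_le.trans
      (card_insert_le u T)

theorem exists_adj_notMem_closedNeighborFinset {v : V}
    (hdel : ∀ x, ∃ y, G.Adj x y ∧ y ≠ v)
    (hlt : (G.deleteVert v).totalDomNum < G.totalDomNum)
    (hγ : G.totalDomNum = Fintype.card V - G.degree v) :
    ∀ x, x ≠ v → ∃ y ∉ G.closedNeighborFinset v, G.Adj x y := by
  obtain ⟨S, hS, hdisj, hcard⟩ :=
    exists_disjoint_closedNeighborFinset_of_totalDomNum_deleteVert_lt hdel hlt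
  have hsub : S ⊆ (G.closedNeighborFinset v)ᶜ := fun y hy =>
    mem_compl.2 (Finset.disjoint_left.1 hdisj hy)
  have hSeq : S = (G.closedNeighborFinset v)ᶜ := by
    refine eq_of_subset_of_card_le hsub ?_
    rw [card_closedNeighborFinset_compl]
    omega
  intro x hx
  obtain ⟨y, hy, hxy⟩ := hS x hx
  exact ⟨y, mem_compl.1 (hSeq ▸ hy), hxy⟩

theorem totalDomNum_lt_of_not_reachable {v w : V} (hδ : 2 ≤ G.minDegree)
    (hv : ∀ x, x ≠ v → ∃ y ∉ G.closedNeighborFinset v, G.Adj x y) (hw : ¬ G.Reachable v w) :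
    G.totalDomNum < Fintype.card V - G.degree v := by
  have hdeg (x : V) : 2 ≤ G.degree x := hδ.trans (G.minDegree_le_degree x)
  have hw' : w ∈ (G.closedNeighborFinset v)ᶜ := by
    rw [mem_compl, mem_closedNeighborFinset]
    rintro (rfl | hvw)
    exacts [hw .rfl, hw hvw.reachable]
  obtain ⟨u, hvu, -⟩ := exists_adj_ne_of_two_le_degree (hdeg v) v
  set D := insert u ((G.closedNeighborFinset v)ᶜ.erase w)
  have hD : ∀ x, x ≠ v → ∃ y ∈ D, G.Adj x y := by
    intro x hx
    by_cases hvx : G.Reachable v x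
    · obtain ⟨y, hy, hxy⟩ := hv x hx
      have hyw : y ≠ w := by rintro rfl; exact hw (hvx.trans hxy.reachable)
      exact ⟨y, mem_insert_of_mem (mem_erase.2 ⟨hyw, mem_compl.2 hy⟩), hxy⟩
    · obtain ⟨y, hxy, hyw⟩ := exists_adj_ne_of_two_le_degree (hdeg x) w
      have hy : y ∉ G.closedNeighborFinset v := by
        rw [mem_closedNeighborFinset]
        rintro (rfl | hvy)
        exacts [hvx hxy.symm.reachable, hvx (hvy.reachable.trans hxy.symm.reachable)]
      exact ⟨y, mem_insert_of_mem (mem_erase.2 ⟨hyw, mem_compl.2 hy⟩), hxy⟩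
  have hDcard : #D ≤ #(G.closedNeighborFinset v)ᶜ :=
    (card_insert_le _ _).trans_eq (card_erase_add_one hw')
  have hpos := card_pos.2 ⟨w, hw'⟩
  have := (isTotalDomSet_of_forall_ne hD (mem_insert_self _ _) hvu).totalDomNum_le
  rw [card_closedNeighborFinset_compl] at hDcard hpos
  omega

/-- every `γₜ`-critical graph `G` with `γₜ(G) = n - Δ(G)` and
`δ(G) ≥ 2` is connected. -/
theorem stmt7 {V : Type*} [Fintype V] (G : SimpleGraph V)
    (hcrit : G.IsTotalDomCritical)
    (hγ : G.totalDomNum = Fintype.card V - G.maxDegree)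
    (hδ : 2 ≤ G.minDegree) :
    G.Connected := by
  have hdeg (x : V) : 2 ≤ G.degree x := hδ.trans (G.minDegree_le_degree x)
  have : Nonempty V := by
    by_contra! h
    simp at hδ
  obtain ⟨v, hv⟩ := G.exists_maximal_degree_vertex
  have hnsupp (x : V) : ¬ G.IsSupportVertex x := fun ⟨u, _, hu⟩ => by
    have := hdeg u
    omega
  have hv' := exists_adj_notMem_closedNeighborFinset
    (fun x => exists_adj_ne_of_two_le_degree (hdeg x) v) (hcrit.2 v (hnsupp v)) (hv ▸ hγ)
  refine (connected_iff_exists_forall_reachable G).2 ⟨v, fun w => ?_⟩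
  by_contra hw
  have := totalDomNum_lt_of_not_reachable hδ hv' hw
  omega

end SimpleGraph
end

section
/- Let G be a γ_t-critical graph of order n with γ_t(G) = n − Δ(G) and δ(G) ≥ 2, let v be a vertex of maximum degree Δ(G), and let S = V(G) − N[v]. Then every connected component of the induced subgraph G[S] is a path P_2 or a path P_3. -/
open scoped Classical

namespace SimpleGraph

variable {V : Type*}

-- helper: walks stay in adjacency-closed sets
private lemma closure_walk {W : Type*} (Hg : SimpleGraph W) (A : Set W)
    (hA : ∀ a ∈ A, ∀ b, Hg.Adj a b → b ∈ A) {a b : W} (w : Hg.Walk a b) :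
    a ∈ A → b ∈ A := by
  induction w with
  | nil => exact id
  | cons h _ ih => exact fun ha => ih (hA _ ha _ h)

private lemma isoP2aux {W : Type*} (Hg : SimpleGraph W) (p q : W) (hpq : Hg.Adj p q) :
    Nonempty (Hg.induce {p, q} ≃g pathGraph 2) := by
  have hne : p ≠ q := hpq.ne
  have hp : p ∈ ({p, q} : Set W) := by simp
  have hq : q ∈ ({p, q} : Set W) := by simp
  let f : Fin 2 → ({p, q} : Set W) := ![⟨p, hp⟩, ⟨q, hq⟩]
  have hbij : Function.Bijective f := by
    constructor
    · intro i j hij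
      fin_cases i <;> fin_cases j <;> simp_all [f, hne, hne.symm, Subtype.ext_iff]
    · rintro ⟨a, ha⟩
      rcases (by simpa using ha : a = p ∨ a = q) with rfl | rfl
      exacts [⟨0, rfl⟩, ⟨1, rfl⟩]
  refine ⟨(RelIso.mk (Equiv.ofBijective f hbij) ?_).symm⟩
  intro i j
  fin_cases i <;> fin_cases j <;>
    simp [f, Equiv.ofBijective, comap_adj, pathGraph_adj, hpq, hpq.symm, Hg.irrefl] <;>
    decide

private lemma isoP3aux {W : Type*} (Hg : SimpleGraph W) (p q z : W) (hpq : Hg.Adj p q)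
    (hqz : Hg.Adj q z) (hpz : ¬ Hg.Adj p z) (hpzne : p ≠ z) :
    Nonempty (Hg.induce {p, q, z} ≃g pathGraph 3) := by
  have h1 : p ≠ q := hpq.ne
  have h2 : q ≠ z := hqz.ne
  have hzp : ¬ Hg.Adj z p := fun h => hpz h.symm
  have hp : p ∈ ({p, q, z} : Set W) := by simp
  have hq : q ∈ ({p, q, z} : Set W) := by simp
  have hz : z ∈ ({p, q, z} : Set W) := by simp
  let f : Fin 3 → ({p, q, z} : Set W) := ![⟨p, hp⟩, ⟨q, hq⟩, ⟨z, hz⟩]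
  have hbij : Function.Bijective f := by
    constructor
    · intro i j hij
      fin_cases i <;> fin_cases j <;>
        simp_all [f, h1, h2, hpzne, h1.symm, h2.symm, hpzne.symm, Subtype.ext_iff]
    · rintro ⟨a, ha⟩
      rcases (by simpa using ha : a = p ∨ a = q ∨ a = z) with rfl | rfl | rfl
      exacts [⟨0, rfl⟩, ⟨1, rfl⟩, ⟨2, rfl⟩]
  refine ⟨(RelIso.mk (Equiv.ofBijective f hbij) ?_).symm⟩
  intro i j
  fin_cases i <;> fin_cases j <;>
    simp [f, Equiv.ofBijective, comap_adj, pathGraph_adj, hpq, hpq.symm, hqz, hqz.symm,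
      hpz, hzp, Hg.irrefl] <;>
    decide

/-- for a `γₜ`-critical graph `G` with `γₜ(G) = n - Δ(G)` and `δ(G) ≥ 2`,
and `v` of maximum degree, every connected component of `G[V - N[v]]` is a `P₂` or a `P₃`. -/
theorem stmt8 {V : Type*} [Fintype V] (G : SimpleGraph V)
    (hcrit : G.IsTotalDomCritical)
    (hγ : G.totalDomNum = Fintype.card V - G.maxDegree)
    (hδ : 2 ≤ G.minDegree)
    (v : V) (hv : G.degree v = G.maxDegree)
    (S : Set V) (hS : S = ({v} ∪ G.neighborSet v)ᶜ) :
    ∀ c : (G.induce S).ConnectedComponent,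
      Nonempty ((G.induce S).induce c.supp ≃g pathGraph 2) ∨
      Nonempty ((G.induce S).induce c.supp ≃g pathGraph 3) := by
  have hdeg2 : ∀ x : V, 2 ≤ G.degree x := fun x => le_trans hδ (G.minDegree_le_degree x)
  have hNoSupport : ∀ x : V, ¬ G.IsSupportVertex x := by
    rintro x ⟨u, -, hu1⟩
    have := hdeg2 u
    omega
  have two_nbrs : ∀ x y : V, ∃ w, G.Adj x w ∧ w ≠ y := by
    intro x y
    by_contra hno
    push_neg at hno
    have hsub : G.neighborFinset x ⊆ {y} := by
      intro w hw
      rw [mem_neighborFinset] at hw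
      simp [hno w hw]
    have := Finset.card_le_card hsub
    rw [card_neighborFinset_eq_degree] at this
    have := hdeg2 x
    simp at *
    omega
  have hγle : ∀ T : Finset V, G.IsTotalDomSet ↑T → G.totalDomNum ≤ T.card :=
    fun T hT => Nat.sInf_le ⟨T, hT, rfl⟩
  -- the key deletion lemma
  have key : ∀ x : V, ∃ D : Finset V,
      D.card < G.totalDomNum ∧ (∀ w ∈ D, ¬ G.Adj x w ∧ w ≠ x) ∧
      (∀ u : V, u ≠ x → ∃ w ∈ D, G.Adj u w) := by
    intro x
    have hlt := hcrit.2 x (hNoSupport x)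
    have hne : {n : ℕ | ∃ D : Finset {u : V // u ≠ x},
        (G.deleteVert x).IsTotalDomSet ↑D ∧ D.card = n}.Nonempty := by
      refine ⟨_, Finset.univ, ?_, rfl⟩
      intro w
      obtain ⟨t, ht, htx⟩ := two_nbrs (↑w : V) x
      exact ⟨⟨t, htx⟩, by simp, ht⟩
    have hmem : (G.deleteVert x).totalDomNum ∈ {n : ℕ | ∃ D : Finset {u : V // u ≠ x},
        (G.deleteVert x).IsTotalDomSet ↑D ∧ D.card = n} := Nat.sInf_mem hne
    obtain ⟨D', hD', hcard⟩ := hmem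
    have hdom : ∀ u : V, u ≠ x → ∃ w ∈ D'.image Subtype.val, G.Adj u w := by
      intro u hu
      obtain ⟨w, hwD, hw⟩ := hD' ⟨u, hu⟩
      exact ⟨↑w, Finset.mem_image_of_mem _ (Finset.mem_coe.mp hwD), hw⟩
    have hcard2 : (D'.image Subtype.val).card < G.totalDomNum := by
      rwa [Finset.card_image_of_injective _ Subtype.val_injective, hcard]
    refine ⟨D'.image Subtype.val, hcard2, ?_, hdom⟩
    intro w hw
    obtain ⟨w', hw', rfl⟩ := Finset.mem_image.mp hw
    refine ⟨?_, w'.2⟩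
    intro hadj
    have htds : G.IsTotalDomSet ↑(D'.image Subtype.val) := by
      intro u
      by_cases hux : u = x
      · subst hux
        exact ⟨↑w', Finset.mem_coe.mpr hw, hadj⟩
      · obtain ⟨t, ht, h⟩ := hdom u hux
        exact ⟨t, Finset.mem_coe.mpr ht, h⟩
    have := hγle _ htds
    omega
  -- membership in S
  have hSmem : ∀ w : V, w ∈ S ↔ (w ≠ v ∧ ¬ G.Adj v w) := by
    intro w
    rw [hS]
    simp [not_or]
  -- the finset version of S
  set S' : Finset V := S.toFinset with hS'def
  have hS'mem : ∀ w : V, w ∈ S' ↔ w ∈ S := fun w => Set.mem_toFinset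
  have hS'eq : S' = (insert v (G.neighborFinset v))ᶜ := by
    ext w
    rw [hS'mem, hSmem]
    simp [not_or, mem_neighborFinset, and_comm]
  have hcardNv : (insert v (G.neighborFinset v)).card = G.maxDegree + 1 := by
    rw [Finset.card_insert_of_notMem (by simp), card_neighborFinset_eq_degree, hv]
  have hNvle : G.maxDegree + 1 ≤ Fintype.card V := by
    rw [← hcardNv]; exact Finset.card_le_univ _
  have hcardS : S'.card + (G.maxDegree + 1) = Fintype.card V := by
    rw [hS'eq, Finset.card_compl, hcardNv]
    omega
  have hγeq : G.totalDomNum = S'.card + 1 := by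
    rw [hγ]; omega
  have hvnS : v ∉ S := by rw [hSmem]; simp
  have hSne : ∀ w ∈ S, w ≠ v := fun w hw => ((hSmem w).mp hw).1
  have hSnadj : ∀ w ∈ S, ¬ G.Adj v w := fun w hw => ((hSmem w).mp hw).2
  have hScompl : ∀ w : V, w ∉ S → w = v ∨ G.Adj v w := by
    intro w hw
    by_contra hcon
    push_neg at hcon
    exact hw ((hSmem w).mpr hcon)
  -- a neighbor of v
  have hu0 : ∃ u, G.Adj v u := by
    obtain ⟨u, hu, -⟩ := two_nbrs v v
    exact ⟨u, hu⟩
  -- K1 : S totally dominates V \ {v}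
  have K1 : ∀ u : V, u ≠ v → ∃ w, w ∈ S ∧ G.Adj u w := by
    obtain ⟨D, hDlt, hDavoid, hDdom⟩ := key v
    have hDsub : D ⊆ S' := by
      intro w hw
      rw [hS'mem, hSmem]
      exact ⟨(hDavoid w hw).2, (hDavoid w hw).1⟩
    have hDcard : S'.card ≤ D.card := by
      by_contra hcon
      push_neg at hcon
      obtain ⟨u₀, hu₀⟩ := hu0
      have htds : G.IsTotalDomSet ↑(insert u₀ D) := by
        intro s
        by_cases hsv : s = v
        · exact ⟨u₀, by simp, hsv ▸ hu₀⟩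
        · obtain ⟨w, hw, h⟩ := hDdom s hsv
          exact ⟨w, by simp [hw], h⟩
      have := hγle _ htds
      have := Finset.card_insert_le u₀ D
      omega
    have hDS : D = S' := Finset.eq_of_subset_of_card_le hDsub hDcard
    intro u hu
    obtain ⟨w, hw, h⟩ := hDdom u hu
    rw [hDS, hS'mem] at hw
    exact ⟨w, hw, h⟩
  -- L2 : for every y, every other vertex has a neighbor outside N[y]
  have L2 : ∀ y a : V, a ≠ y → ∃ w, G.Adj a w ∧ ¬ G.Adj y w ∧ w ≠ y := by
    intro y a ha
    obtain ⟨D, -, hDavoid, hDdom⟩ := key y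
    obtain ⟨w, hwD, hw⟩ := hDdom a ha
    exact ⟨w, hw, (hDavoid w hwD).1, (hDavoid w hwD).2⟩
  -- the swap construction
  have swap : ∀ a b u : V, a ∈ S → b ∈ S → a ≠ b → G.Adj v u →
      (∀ s, s ∈ S → ∃ w, G.Adj s w ∧ ((w ∈ S ∧ w ≠ a ∧ w ≠ b) ∨ w = u)) → False := by
    intro a b u haS hbS hab hvu hdom
    have huS : u ∉ S := fun h => hSnadj u h hvu
    set T : Finset V := insert v (insert u ((S'.erase a).erase b)) with hT
    have hTtds : G.IsTotalDomSet ↑T := by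
      intro s
      by_cases hsS : s ∈ S
      · obtain ⟨w, hsw, hw⟩ := hdom s hsS
        refine ⟨w, ?_, hsw⟩
        rcases hw with ⟨hwS, hwa, hwb⟩ | rfl
        · simp only [hT, Finset.coe_insert, Set.mem_insert_iff, Finset.mem_coe,
            Finset.mem_erase]
          exact Or.inr (Or.inr ⟨hwb, hwa, (hS'mem w).mpr hwS⟩)
        · simp [hT]
      · rcases hScompl s hsS with rfl | hsv
        · exact ⟨u, by simp [hT], hvu⟩
        · exact ⟨v, by simp [hT], hsv.symm⟩
    have hbe : b ∈ S'.erase a := Finset.mem_erase.mpr ⟨Ne.symm hab, (hS'mem b).mpr hbS⟩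
    have hae : a ∈ S' := (hS'mem a).mpr haS
    have hc1 : (S'.erase a).card + 1 = S'.card := Finset.card_erase_add_one hae
    have hc2 : ((S'.erase a).erase b).card + 1 = (S'.erase a).card :=
      Finset.card_erase_add_one hbe
    have hvT : v ∉ insert u ((S'.erase a).erase b) := by
      simp only [Finset.mem_insert, Finset.mem_erase]
      push_neg
      refine ⟨hvu.ne, fun _ _ => ?_⟩
      intro h
      exact hvnS ((hS'mem v).mp h)
    have huT : u ∉ (S'.erase a).erase b := by
      intro h
      exact huS ((hS'mem u).mp (Finset.mem_of_mem_erase (Finset.mem_of_mem_erase h)))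
    have hcT : T.card = ((S'.erase a).erase b).card + 2 := by
      rw [hT, Finset.card_insert_of_notMem hvT, Finset.card_insert_of_notMem huT]
    have := hγle _ hTtds
    omega
  -- no path on four vertices inside S
  have noP4 : ∀ a b c d : V, a ∈ S → b ∈ S → c ∈ S → d ∈ S →
      G.Adj a b → G.Adj b c → G.Adj c d → a ≠ c → b ≠ d → a ≠ d → False := by
    intro a b c d haS hbS hcS hdS hab hbc hcd hac hbd had
    set P : ℕ → Prop := fun k => ∃ f : ℕ → V,
      (∀ i j, i < k → j < k → f i = f j → i = j) ∧
      (∀ i, i < k → f i ∈ S) ∧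
      (∀ i, i + 1 < k → G.Adj (f i) (f (i + 1))) with hP
    have n1 : a ≠ b := hab.ne
    have n2 : b ≠ c := hbc.ne
    have n3 : c ≠ d := hcd.ne
    have h4 : P 4 := by
      refine ⟨fun i => match i with | 0 => a | 1 => b | 2 => c | _ => d, ?_, ?_, ?_⟩
      · intro i j hi hj hf
        have hi' : i = 0 ∨ i = 1 ∨ i = 2 ∨ i = 3 := by omega
        have hj' : j = 0 ∨ j = 1 ∨ j = 2 ∨ j = 3 := by omega
        rcases hi' with rfl | rfl | rfl | rfl <;> rcases hj' with rfl | rfl | rfl | rfl <;>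
          first
            | rfl
            | (exact absurd hf n1) | (exact absurd hf n1.symm)
            | (exact absurd hf n2) | (exact absurd hf n2.symm)
            | (exact absurd hf n3) | (exact absurd hf n3.symm)
            | (exact absurd hf hac) | (exact absurd hf (Ne.symm hac))
            | (exact absurd hf hbd) | (exact absurd hf (Ne.symm hbd))
            | (exact absurd hf had) | (exact absurd hf (Ne.symm had))
      · intro i hi
        have hi' : i = 0 ∨ i = 1 ∨ i = 2 ∨ i = 3 := by omega
        rcases hi' with rfl | rfl | rfl | rfl
        exacts [haS, hbS, hcS, hdS]
      · intro i hi
        have hi' : i = 0 ∨ i = 1 ∨ i = 2 := by omega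
        rcases hi' with rfl | rfl | rfl
        exacts [hab, hbc, hcd]
    have hbdd : BddAbove (setOf P) := by
      refine ⟨Fintype.card V, ?_⟩
      rintro k ⟨f, hinj, -, -⟩
      have hinj2 : Function.Injective (fun i : Fin k => f i) :=
        fun i j h => Fin.ext (hinj i j i.2 j.2 h)
      simpa using Fintype.card_le_of_injective _ hinj2
    have hmem : P (sSup (setOf P)) := Nat.sSup_mem ⟨4, h4⟩ hbdd
    set k := sSup (setOf P) with hk
    have hk4 : 4 ≤ k := le_csSup hbdd h4
    obtain ⟨f, hinj, hfS, hfadj⟩ := hmem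
    have next : ¬ P (k + 1) := fun h => absurd (le_csSup hbdd h) (by omega)
    have ext_front : ∀ z, z ∈ S → G.Adj z (f 0) → ∃ i, i < k ∧ f i = z := by
      intro z hzS hz
      by_contra hno
      push_neg at hno
      apply next
      refine ⟨fun i => if i = 0 then z else f (i - 1), ?_, ?_, ?_⟩
      · intro i j hi hj hf
        simp only [] at hf
        split_ifs at hf <;>
          first
            | omega
            | exact absurd hf.symm (hno (j - 1) (by omega))
            | exact absurd hf (hno (i - 1) (by omega))
            | (have := hinj (i - 1) (j - 1) (by omega) (by omega) hf; omega)
      · intro i hi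
        show (if i = 0 then z else f (i - 1)) ∈ S
        split_ifs with h
        · exact hzS
        · exact hfS (i - 1) (by omega)
      · intro i hi
        show G.Adj (if i = 0 then z else f (i - 1)) (if i + 1 = 0 then z else f (i + 1 - 1))
        rw [if_neg (by omega : ¬ i + 1 = 0)]
        by_cases h0 : i = 0
        · rw [if_pos h0]
          simpa [h0] using hz
        · rw [if_neg h0]
          have h1 : i - 1 + 1 = i := by omega
          have h2 : i + 1 - 1 = i := by omega
          have := hfadj (i - 1) (by omega)
          rw [h1] at this
          rwa [h2]
    have ext_back : ∀ z, z ∈ S → G.Adj z (f (k - 1)) → ∃ i, i < k ∧ f i = z := by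
      intro z hzS hz
      by_contra hno
      push_neg at hno
      apply next
      refine ⟨fun i => if i = k then z else f i, ?_, ?_, ?_⟩
      · intro i j hi hj hf
        simp only [] at hf
        split_ifs at hf <;>
          first
            | omega
            | exact absurd hf.symm (hno j (by omega))
            | exact absurd hf (hno i (by omega))
            | exact hinj i j (by omega) (by omega) hf
      · intro i hi
        show (if i = k then z else f i) ∈ S
        split_ifs with h
        · exact hzS
        · exact hfS i (by omega)
      · intro i hi
        show G.Adj (if i = k then z else f i) (if i + 1 = k then z else f (i + 1))
        rw [if_neg (by omega : ¬ i = k)]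
        by_cases h0 : i + 1 = k
        · rw [if_pos h0]
          have : i = k - 1 := by omega
          rw [this]
          exact hz.symm
        · rw [if_neg h0]
          exact hfadj i (by omega)
    obtain ⟨u₀, hu₀⟩ := hu0
    have hS0 : f 0 ∈ S := hfS 0 (by omega)
    have hSk : f (k - 1) ∈ S := hfS (k - 1) (by omega)
    refine swap (f 0) (f (k - 1)) u₀ hS0 hSk ?_ hu₀ ?_
    · intro h
      have := hinj 0 (k - 1) (by omega) (by omega) h
      omega
    · intro s hsS
      by_cases hsf : ∃ i, i < k ∧ f i = s
      · obtain ⟨i, hik, rfl⟩ := hsf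
        have pick : ∀ j, j < k → (j = i + 1 ∨ j + 1 = i) → j ≠ 0 → j ≠ k - 1 →
            ∃ w, G.Adj (f i) w ∧ ((w ∈ S ∧ w ≠ f 0 ∧ w ≠ f (k - 1)) ∨ w = u₀) := by
          intro j hjk hadj hj0 hjk1
          refine ⟨f j, ?_, Or.inl ⟨hfS j hjk, ?_, ?_⟩⟩
          · rcases hadj with rfl | h
            · exact hfadj i (by omega)
            · have := hfadj j (by omega)
              rw [h] at this
              exact this.symm
          · intro h
            exact hj0 (hinj j 0 hjk (by omega) h)
          · intro h
            exact hjk1 (hinj j (k - 1) hjk (by omega) h)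
        by_cases h0 : i = 0
        · exact pick 1 (by omega) (by omega) (by omega) (by omega)
        by_cases hl : i = k - 1
        · exact pick (k - 2) (by omega) (by omega) (by omega) (by omega)
        by_cases h1 : i = 1
        · exact pick 2 (by omega) (by omega) (by omega) (by omega)
        · exact pick (i - 1) (by omega) (by omega) (by omega) (by omega)
      · push_neg at hsf
        obtain ⟨t, htS, hst⟩ := K1 s (hSne s hsS)
        refine ⟨t, hst, Or.inl ⟨htS, ?_, ?_⟩⟩
        · rintro rfl
          obtain ⟨i, hik, hfi⟩ := ext_front s hsS hst
          exact hsf i hik hfi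
        · rintro rfl
          obtain ⟨i, hik, hfi⟩ := ext_back s hsS hst
          exact hsf i hik hfi
  -- component analysis
  set H := G.induce S with hH
  intro c
  have cne : ∀ {a b : ↥S}, a ≠ b → (↑a : V) ≠ ↑b := fun h he => h (Subtype.ext he)
  -- no triangles in S
  have triangle : ∀ p q z : ↥S, G.Adj ↑p ↑q → G.Adj ↑q ↑z → G.Adj ↑p ↑z → False := by
    intro p q z gpq gqz gpz
    have confp : ∀ s, s ∈ S → G.Adj s ↑p → s = ↑q ∨ s = ↑z := by
      intro s hs hsp
      by_contra hcon
      push_neg at hcon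
      exact noP4 s ↑p ↑q ↑z hs p.2 q.2 z.2 hsp gpq gqz hcon.1 gpz.ne hcon.2
    have confq : ∀ s, s ∈ S → G.Adj s ↑q → s = ↑p ∨ s = ↑z := by
      intro s hs hsq
      by_contra hcon
      push_neg at hcon
      exact noP4 s ↑q ↑z ↑p hs q.2 z.2 p.2 hsq gqz gpz.symm hcon.2 gpq.ne' hcon.1
    have confz : ∀ s, s ∈ S → G.Adj s ↑z → s = ↑p ∨ s = ↑q := by
      intro s hs hsz
      by_contra hcon
      push_neg at hcon
      exact noP4 s ↑z ↑q ↑p hs z.2 q.2 p.2 hsz gqz.symm gpq.symm hcon.2 gpz.ne' hcon.1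
    obtain ⟨w, hwadj, hwq, hwneq⟩ := L2 ↑q ↑p gpq.ne
    have hwnS : w ∉ S := by
      intro hwS
      rcases confp w hwS hwadj.symm with rfl | rfl
      · exact hwneq rfl
      · exact hwq gqz
    have hwv : G.Adj v w := by
      rcases hScompl w hwnS with rfl | h
      · exact absurd hwadj.symm (hSnadj ↑p p.2)
      · exact h
    apply swap ↑q ↑z w q.2 z.2 gqz.ne hwv
    intro s hsS
    by_cases hs1 : s = ↑p
    · exact ⟨w, hs1 ▸ hwadj, Or.inr rfl⟩
    by_cases hs2 : s = ↑q
    · exact ⟨↑p, hs2 ▸ gpq.symm, Or.inl ⟨p.2, gpq.ne, gpz.ne⟩⟩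
    by_cases hs3 : s = ↑z
    · exact ⟨↑p, hs3 ▸ gpz.symm, Or.inl ⟨p.2, gpq.ne, gpz.ne⟩⟩
    · obtain ⟨t, htS, hst⟩ := K1 s (hSne s hsS)
      refine ⟨t, hst, Or.inl ⟨htS, ?_, ?_⟩⟩
      · rintro rfl
        rcases confq s hsS hst with h | h
        · exact hs1 h
        · exact hs3 h
      · rintro rfl
        rcases confz s hsS hst with h | h
        · exact hs1 h
        · exact hs2 h
  -- three-vertex component case (or contradiction)
  have main3 : ∀ p q z : ↥S, H.connectedComponentMk p = c → H.Adj p q → H.Adj q z → p ≠ z →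
      Nonempty ((H.induce c.supp) ≃g pathGraph 2) ∨
      Nonempty ((H.induce c.supp) ≃g pathGraph 3) := by
    intro p q z hpc hpq hqz hpz
    have gpq : G.Adj (↑p : V) ↑q := hpq
    have gqz : G.Adj (↑q : V) ↑z := hqz
    have gpzne : (↑p : V) ≠ ↑z := cne hpz
    by_cases htri : G.Adj ↑p ↑z
    · exact (triangle p q z gpq gqz htri).elim
    have hpt4 : ∀ t : ↥S, t ≠ p → t ≠ q → t ≠ z →
        ¬ H.Adj t p ∧ ¬ H.Adj t q ∧ ¬ H.Adj t z := by
      intro t htp htq htz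
      have gtp : (↑t : V) ≠ ↑p := cne htp
      have gtq : (↑t : V) ≠ ↑q := cne htq
      have gtz : (↑t : V) ≠ ↑z := cne htz
      refine ⟨?_, ?_, ?_⟩
      · intro h
        exact noP4 ↑t ↑p ↑q ↑z t.2 p.2 q.2 z.2 h gpq gqz gtq gpzne gtz
      · intro h
        have gtq' : G.Adj (↑t : V) ↑q := h
        have hptadj : ¬ G.Adj (↑p : V) ↑t := fun h' =>
          noP4 ↑z ↑q ↑p ↑t z.2 q.2 p.2 t.2 gqz.symm gpq.symm h' gpzne.symm (Ne.symm gtq) (Ne.symm gtz)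
        have confz : ∀ s, s ∈ S → G.Adj s ↑z → s = ↑q := by
          intro s hs hsz
          by_contra hsq
          have hsp : s ≠ ↑p := fun he => htri (he ▸ hsz)
          exact noP4 s ↑z ↑q ↑p hs z.2 q.2 p.2 hsz gqz.symm gpq.symm hsq gpzne.symm hsp
        have conft : ∀ s, s ∈ S → G.Adj s ↑t → s = ↑q := by
          intro s hs hst
          by_contra hsq
          have hsp : s ≠ ↑p := fun he => hptadj (he ▸ hst)
          exact noP4 s ↑t ↑q ↑p hs t.2 q.2 p.2 hst gtq' gpq.symm hsq gtp hsp
        obtain ⟨u₀, hu₀⟩ := hu0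
        apply swap ↑z ↑t u₀ z.2 t.2 (Ne.symm gtz) hu₀
        intro s hsS
        by_cases hs1 : s = ↑p
        · exact ⟨↑q, hs1 ▸ gpq, Or.inl ⟨q.2, gqz.ne, Ne.symm gtq⟩⟩
        by_cases hs2 : s = ↑q
        · exact ⟨↑p, hs2 ▸ gpq.symm, Or.inl ⟨p.2, gpzne, Ne.symm gtp⟩⟩
        by_cases hs3 : s = ↑z
        · exact ⟨↑q, hs3 ▸ gqz.symm, Or.inl ⟨q.2, gqz.ne, Ne.symm gtq⟩⟩
        by_cases hs4 : s = ↑t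
        · exact ⟨↑q, hs4 ▸ gtq', Or.inl ⟨q.2, gqz.ne, Ne.symm gtq⟩⟩
        · obtain ⟨w, hwS, hsw⟩ := K1 s (hSne s hsS)
          refine ⟨w, hsw, Or.inl ⟨hwS, ?_, ?_⟩⟩
          · rintro rfl
            exact hs2 (confz s hsS hsw)
          · rintro rfl
            exact hs2 (conft s hsS hsw)
      · intro h
        have h' : G.Adj (↑z : V) ↑t := ((h : G.Adj (↑t : V) ↑z)).symm
        exact noP4 ↑p ↑q ↑z ↑t p.2 q.2 z.2 t.2 gpq gqz h' gpzne (Ne.symm gtq) (Ne.symm gtp)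
    -- supp of the component is exactly {p, q, z}
    have hclosed : ∀ a ∈ ({p, q, z} : Set ↥S), ∀ b, H.Adj a b → b ∈ ({p, q, z} : Set ↥S) := by
      intro a ha b hab
      simp only [Set.mem_insert_iff, Set.mem_singleton_iff] at ha ⊢
      by_contra hb
      push_neg at hb
      obtain ⟨m1, m2, m3⟩ := hpt4 b hb.1 hb.2.1 hb.2.2
      rcases ha with rfl | rfl | rfl
      · exact m1 hab.symm
      · exact m2 hab.symm
      · exact m3 hab.symm
    have hsupp : c.supp = {p, q, z} := by
      ext w
      simp only [ConnectedComponent.mem_supp_iff]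
      constructor
      · intro hw
        have hr : H.Reachable p w := ConnectedComponent.eq.mp (hpc.trans hw.symm)
        exact closure_walk H _ hclosed hr.some (by simp)
      · intro hw
        simp only [Set.mem_insert_iff, Set.mem_singleton_iff] at hw
        rcases hw with rfl | rfl | rfl
        · exact hpc
        · exact (ConnectedComponent.sound hpq.symm.reachable).trans hpc
        · exact (ConnectedComponent.sound (hqz.symm.reachable.trans hpq.symm.reachable)).trans hpc
    rw [hsupp]
    exact Or.inr (isoP3aux H p q z hpq hqz htri hpz)
  -- find a representative and an S-neighbor
  obtain ⟨x, hxc⟩ := c.exists_rep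
  obtain ⟨w0, hw0S, hw0⟩ := K1 (↑x : V) (hSne ↑x x.2)
  set y : ↥S := ⟨w0, hw0S⟩ with hy
  have hxy : H.Adj x y := hw0
  by_cases hz : ∃ z : ↥S, z ≠ x ∧ z ≠ y ∧ (H.Adj z x ∨ H.Adj z y)
  · obtain ⟨z, hzx, hzy, hadj | hadj⟩ := hz
    · exact main3 y x z ((ConnectedComponent.sound hxy.symm.reachable).trans hxc)
        hxy.symm hadj.symm (Ne.symm hzy)
    · exact main3 x y z hxc hxy hadj.symm (Ne.symm hzx)
  · push_neg at hz
    have hclosed : ∀ a ∈ ({x, y} : Set ↥S), ∀ b, H.Adj a b → b ∈ ({x, y} : Set ↥S) := by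
      intro a ha b hab
      simp only [Set.mem_insert_iff, Set.mem_singleton_iff] at ha ⊢
      by_contra hb
      push_neg at hb
      obtain ⟨hz1, hz2⟩ := hz b hb.1 hb.2
      rcases ha with rfl | rfl
      · exact hz1 hab.symm
      · exact hz2 hab.symm
    have hsupp : c.supp = {x, y} := by
      ext w
      simp only [ConnectedComponent.mem_supp_iff]
      constructor
      · intro hw
        have hr : H.Reachable x w := ConnectedComponent.eq.mp (hxc.trans hw.symm)
        exact closure_walk H _ hclosed hr.some (by simp)
      · intro hw
        simp only [Set.mem_insert_iff, Set.mem_singleton_iff] at hw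
        rcases hw with rfl | rfl
        · exact hxc
        · exact (ConnectedComponent.sound hxy.symm.reachable).trans hxc
    rw [hsupp]
    exact Or.inl (isoP2aux H x y hxy)

end SimpleGraph
end
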